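/- arXiv:math/0511078 — 5 statements merged into one kernel-verified Lean document; each statement's English description precedes it below -/
import Mathlib

section
/- Let (Ω, F, P) be a probability space and let A and B be sub-σ-fields of F with ψ*(A,B) < ∞. Then I(A,B) ≤ ψ*(A,B)·log ψ*(A,B). -/
open MeasureTheory ProbabilityTheory ENNReal Filter

noncomputable section

namespace StrongMixing

variable {Ω : Type*}

/-- The strong mixing (α) dependence coefficient between two sub-σ-fields. -/
def alphaDep {mΩ : MeasurableSpace Ω} (P : Measure Ω) (𝒜 𝒝 : MeasurableSpace Ω) : ℝ≥0∞ :=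
  ⨆ (A : Set Ω) (_ : MeasurableSet[𝒜] A) (B : Set Ω) (_ : MeasurableSet[𝒝] B),
    ENNReal.ofReal |(P (A ∩ B)).toReal - (P A).toReal * (P B).toReal|

/-- The uniform mixing (φ) dependence coefficient between two sub-σ-fields. -/
def phiDep {mΩ : MeasurableSpace Ω} (P : Measure Ω) (𝒜 𝒝 : MeasurableSpace Ω) : ℝ≥0∞ :=
  ⨆ (A : Set Ω) (_ : MeasurableSet[𝒜] A) (_ : 0 < P A) (B : Set Ω) (_ : MeasurableSet[𝒝] B),
    ENNReal.ofReal |(P (A ∩ B)).toReal / (P A).toReal - (P B).toReal|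

/-- The ψ dependence coefficient between two sub-σ-fields. -/
def psiDep {mΩ : MeasurableSpace Ω} (P : Measure Ω) (𝒜 𝒝 : MeasurableSpace Ω) : ℝ≥0∞ :=
  ⨆ (A : Set Ω) (_ : MeasurableSet[𝒜] A) (_ : 0 < P A)
    (B : Set Ω) (_ : MeasurableSet[𝒝] B) (_ : 0 < P B),
    ENNReal.ofReal |(P (A ∩ B)).toReal / ((P A).toReal * (P B).toReal) - 1|

/-- The ψ* dependence coefficient between two sub-σ-fields. -/
def psiStarDep {mΩ : MeasurableSpace Ω} (P : Measure Ω) (𝒜 𝒝 : MeasurableSpace Ω) : ℝ≥0∞ :=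
  ⨆ (A : Set Ω) (_ : MeasurableSet[𝒜] A) (_ : 0 < P A)
    (B : Set Ω) (_ : MeasurableSet[𝒝] B) (_ : 0 < P B),
    ENNReal.ofReal ((P (A ∩ B)).toReal / ((P A).toReal * (P B).toReal))

/-- The ψ' dependence coefficient between two sub-σ-fields (an infimum). -/
def psiPrimeDep {mΩ : MeasurableSpace Ω} (P : Measure Ω) (𝒜 𝒝 : MeasurableSpace Ω) : ℝ≥0∞ :=
  ⨅ (A : Set Ω) (_ : MeasurableSet[𝒜] A) (_ : 0 < P A)
    (B : Set Ω) (_ : MeasurableSet[𝒝] B) (_ : 0 < P B),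
    ENNReal.ofReal ((P (A ∩ B)).toReal / ((P A).toReal * (P B).toReal))

/-- `A : Fin I → Set Ω` is a finite measurable partition of `Ω` with pieces in `m`. -/
def IsPartition {I : ℕ} (m : MeasurableSpace Ω) (A : Fin I → Set Ω) : Prop :=
  (∀ i, MeasurableSet[m] (A i)) ∧ Pairwise (Function.onFun Disjoint A) ∧ (⋃ i, A i) = Set.univ

/-- The absolute regularity (β) dependence coefficient between two sub-σ-fields. -/
def betaDep {mΩ : MeasurableSpace Ω} (P : Measure Ω) (𝒜 𝒝 : MeasurableSpace Ω) : ℝ≥0∞ :=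
  ⨆ (I : ℕ) (J : ℕ) (A : Fin I → Set Ω) (B : Fin J → Set Ω)
    (_ : IsPartition 𝒜 A) (_ : IsPartition 𝒝 B),
    ENNReal.ofReal ((1 / 2) * ∑ i, ∑ j,
      |(P (A i ∩ B j)).toReal - (P (A i)).toReal * (P (B j)).toReal|)

/-- The coefficient of information `I(𝒜,𝒝)` between two sub-σ-fields. -/
def infoDep {mΩ : MeasurableSpace Ω} (P : Measure Ω) (𝒜 𝒝 : MeasurableSpace Ω) : ℝ≥0∞ :=
  ⨆ (I : ℕ) (J : ℕ) (A : Fin I → Set Ω) (B : Fin J → Set Ω)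
    (_ : IsPartition 𝒜 A) (_ : IsPartition 𝒝 B),
    ENNReal.ofReal (∑ i, ∑ j, (P (A i ∩ B j)).toReal *
      Real.log ((P (A i ∩ B j)).toReal / ((P (A i)).toReal * (P (B j)).toReal)))

/-- Covariance of two real random variables (defined via centered integrals). -/
def covP {mΩ : MeasurableSpace Ω} (P : Measure Ω) (f g : Ω → ℝ) : ℝ :=
  ∫ ω, (f ω - ∫ x, f x ∂P) * (g ω - ∫ x, g x ∂P) ∂P

/-- Variance of a real random variable. -/
def varP {mΩ : MeasurableSpace Ω} (P : Measure Ω) (f : Ω → ℝ) : ℝ := covP P f f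

/-- The maximal correlation (ρ) dependence coefficient between two sub-σ-fields. -/
def rhoDep {mΩ : MeasurableSpace Ω} (P : Measure Ω) (𝒜 𝒝 : MeasurableSpace Ω) : ℝ≥0∞ :=
  ⨆ (f : Ω → ℝ) (g : Ω → ℝ)
    (_ : Measurable[𝒜] f) (_ : Measurable[𝒝] g)
    (_ : MemLp f 2 P) (_ : MemLp g 2 P)
    (_ : 0 < varP P f) (_ : 0 < varP P g),
    ENNReal.ofReal |covP P f g / (Real.sqrt (varP P f) * Real.sqrt (varP P g))|

/-- ρ-mixing "except on small sets": the coefficient `ρ_cond`. -/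
def rhoCondDep {mΩ : MeasurableSpace Ω} (P : Measure Ω) (𝒜 𝒝 : MeasurableSpace Ω) : ℝ≥0∞ :=
  sInf ({1} ∪ {ε : ℝ≥0∞ | 0 < ε ∧ ε < 1 ∧ ∃ D : Set Ω, MeasurableSet[𝒜] D ∧
    1 - ε ≤ P D ∧ rhoDep (ProbabilityTheory.cond P D) 𝒜 𝒝 ≤ ε})

/-- σ-field generated by the `X k`, `k ≤ j`. -/
def sigmaLE (X : ℤ → Ω → ℝ) (j : ℤ) : MeasurableSpace Ω :=
  ⨆ k : ℤ, ⨆ _ : k ≤ j, MeasurableSpace.comap (X k) (inferInstance : MeasurableSpace ℝ)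

/-- σ-field generated by the `X k`, `k ≥ j`. -/
def sigmaGE (X : ℤ → Ω → ℝ) (j : ℤ) : MeasurableSpace Ω :=
  ⨆ k : ℤ, ⨆ _ : j ≤ k, MeasurableSpace.comap (X k) (inferInstance : MeasurableSpace ℝ)

/-- σ-field generated by the `X k`, `k ∈ S`. -/
def sigmaOn (X : ℤ → Ω → ℝ) (S : Set ℤ) : MeasurableSpace Ω :=
  ⨆ k ∈ S, MeasurableSpace.comap (X k) (inferInstance : MeasurableSpace ℝ)

/-- The α-mixing coefficients `α(n)` of a random sequence. -/
def alphaSeq {mΩ : MeasurableSpace Ω} (P : Measure Ω) (X : ℤ → Ω → ℝ) (n : ℕ) : ℝ≥0∞ :=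
  ⨆ j : ℤ, alphaDep P (sigmaLE X j) (sigmaGE X (j + n))

/-- The ρ-mixing coefficients `ρ(n)` of a random sequence. -/
def rhoSeq {mΩ : MeasurableSpace Ω} (P : Measure Ω) (X : ℤ → Ω → ℝ) (n : ℕ) : ℝ≥0∞ :=
  ⨆ j : ℤ, rhoDep P (sigmaLE X j) (sigmaGE X (j + n))

/-- The coefficients `ρ_cond(n)` of a random sequence. -/
def rhoCondSeq {mΩ : MeasurableSpace Ω} (P : Measure Ω) (X : ℤ → Ω → ℝ) (n : ℕ) : ℝ≥0∞ :=
  ⨆ j : ℤ, rhoCondDep P (sigmaLE X j) (sigmaGE X (j + n))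

/-- Strict stationarity: all shifts of the sequence have the same law on `ℝ^ℤ`. -/
def StrictlyStationary {mΩ : MeasurableSpace Ω} (P : Measure Ω) (X : ℤ → Ω → ℝ) : Prop :=
  ∀ n : ℤ, Measure.map (fun ω => fun k => X (k + n) ω) P
    = Measure.map (fun ω => fun k => X k ω) P

/-- The interlaced coefficients `α*(n)`. -/
def alphaStarSeq {mΩ : MeasurableSpace Ω} (P : Measure Ω) (X : ℤ → Ω → ℝ) (n : ℕ) : ℝ≥0∞ :=
  ⨆ (S : Set ℤ) (T : Set ℤ) (_ : S.Nonempty) (_ : T.Nonempty) (_ : Disjoint S T)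
    (_ : ∀ s ∈ S, ∀ t ∈ T, (n : ℤ) ≤ |s - t|),
    alphaDep P (sigmaOn X S) (sigmaOn X T)

/-- The interlaced coefficients `ρ*(n)`. -/
def rhoStarSeq {mΩ : MeasurableSpace Ω} (P : Measure Ω) (X : ℤ → Ω → ℝ) (n : ℕ) : ℝ≥0∞ :=
  ⨆ (S : Set ℤ) (T : Set ℤ) (_ : S.Nonempty) (_ : T.Nonempty) (_ : Disjoint S T)
    (_ : ∀ s ∈ S, ∀ t ∈ T, (n : ℤ) ≤ |s - t|),
    rhoDep P (sigmaOn X S) (sigmaOn X T)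

/-- The interlaced coefficients `β*(n)`. -/
def betaStarSeq {mΩ : MeasurableSpace Ω} (P : Measure Ω) (X : ℤ → Ω → ℝ) (n : ℕ) : ℝ≥0∞ :=
  ⨆ (S : Set ℤ) (T : Set ℤ) (_ : S.Nonempty) (_ : T.Nonempty) (_ : Disjoint S T)
    (_ : ∀ s ∈ S, ∀ t ∈ T, (n : ℤ) ≤ |s - t|),
    betaDep P (sigmaOn X S) (sigmaOn X T)

/-- `m`-dependence of a random sequence. -/
def MDependent {mΩ : MeasurableSpace Ω} (P : Measure Ω) (X : ℤ → Ω → ℝ) (m : ℕ) : Prop :=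
  ∀ j : ℤ, ProbabilityTheory.Indep (sigmaLE X j) (sigmaGE X (j + m + 1)) P

/-- Mixing in the ergodic-theoretic sense. -/
def MixingET {mΩ : MeasurableSpace Ω} (P : Measure Ω) (X : ℤ → Ω → ℝ) : Prop :=
  ∀ A B : Set (ℤ → ℝ), MeasurableSet A → MeasurableSet B →
    Tendsto (fun n : ℕ => P {ω | (fun k => X k ω) ∈ A ∧ (fun k => X (k + n) ω) ∈ B})
      atTop (nhds (P {ω | (fun k => X k ω) ∈ A} * P {ω | (fun k => X k ω) ∈ B}))

/-- The Markov property: past and future are conditionally independent given the present. -/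
def IsMarkovChain {mΩ : MeasurableSpace Ω} (P : Measure Ω) (X : ℤ → Ω → ℝ) : Prop :=
  ∀ j : ℤ, ∀ A B : Set Ω, MeasurableSet[sigmaLE X j] A → MeasurableSet[sigmaGE X j] B →
    MeasureTheory.condExp (MeasurableSpace.comap (X j) (inferInstance : MeasurableSpace ℝ)) P
        ((A ∩ B).indicator (fun _ => (1 : ℝ)))
      =ᵐ[P] fun ω =>
        (MeasureTheory.condExp (MeasurableSpace.comap (X j) (inferInstance : MeasurableSpace ℝ)) P
          (A.indicator (fun _ => (1 : ℝ))) ω) *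
        (MeasureTheory.condExp (MeasurableSpace.comap (X j) (inferInstance : MeasurableSpace ℝ)) P
          (B.indicator (fun _ => (1 : ℝ))) ω)

/-
Every ratio `P(A ∩ B) / (P(A) P(B))` with `P(A ∩ B) > 0` is at most `ψ*`, so each logarithm in
the sum defining `I` is at most `log ψ*`; the weights `P(A_i ∩ B_j)` sum to `1`, hence
`I ≤ log ψ* ≤ ψ* log ψ*`, the last step because `ψ* ≥ 1` (take `A = B = Ω`).
-/

section PsiStar

variable {mΩ : MeasurableSpace Ω} (P : Measure Ω) {𝒜 𝒝 : MeasurableSpace Ω}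

lemma one_le_psiStarDep [IsProbabilityMeasure P] : 1 ≤ psiStarDep P 𝒜 𝒝 := by
  have h : ENNReal.ofReal ((P (Set.univ ∩ Set.univ)).toReal /
      ((P Set.univ).toReal * (P Set.univ).toReal)) ≤ psiStarDep P 𝒜 𝒝 :=
    le_iSup₂_of_le Set.univ .univ <| le_iSup₂_of_le (by simp) Set.univ <|
      le_iSup₂_of_le .univ (by simp) le_rfl
  simpa using h

lemma div_le_toReal_psiStarDep (hψ : psiStarDep P 𝒜 𝒝 ≠ ⊤) {A B : Set Ω}
    (hA : MeasurableSet[𝒜] A) (hB : MeasurableSet[𝒝] B) (hPA : 0 < P A) (hPB : 0 < P B) :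
    (P (A ∩ B)).toReal / ((P A).toReal * (P B).toReal) ≤ (psiStarDep P 𝒜 𝒝).toReal :=
  (ENNReal.ofReal_le_iff_le_toReal hψ).mp <|
    le_iSup₂_of_le A hA <| le_iSup₂_of_le hPA B <| le_iSup₂_of_le hB hPB le_rfl

lemma toReal_mul_log_div_le [IsFiniteMeasure P] (hψ : psiStarDep P 𝒜 𝒝 ≠ ⊤) {A B : Set Ω}
    (hA : MeasurableSet[𝒜] A) (hB : MeasurableSet[𝒝] B) :
    (P (A ∩ B)).toReal * Real.log ((P (A ∩ B)).toReal / ((P A).toReal * (P B).toReal)) ≤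
      (P (A ∩ B)).toReal * Real.log (psiStarDep P 𝒜 𝒝).toReal := by
  rcases ENNReal.toReal_nonneg.eq_or_lt with hp | hp
  · rw [← hp, zero_mul, zero_mul]
  have hPAB : 0 < P (A ∩ B) := (ENNReal.toReal_pos_iff.mp hp).1
  have hPA : 0 < P A := hPAB.trans_le (measure_mono Set.inter_subset_left)
  have hPB : 0 < P B := hPAB.trans_le (measure_mono Set.inter_subset_right)
  have hratio : 0 < (P (A ∩ B)).toReal / ((P A).toReal * (P B).toReal) :=
    div_pos hp (mul_pos (ENNReal.toReal_pos hPA.ne' (measure_ne_top P A))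
      (ENNReal.toReal_pos hPB.ne' (measure_ne_top P B)))
  gcongr
  exact div_le_toReal_psiStarDep P hψ hA hB hPA hPB

end PsiStar

namespace IsPartition

variable {mΩ : MeasurableSpace Ω} {I J : ℕ}

lemma sum_measure_inter {B : Fin J → Set Ω} (hB : IsPartition mΩ B) (μ : Measure Ω)
    {s : Set Ω} (hs : MeasurableSet s) : ∑ j, μ (s ∩ B j) = μ s := by
  have hdisj : Pairwise (Function.onFun Disjoint fun j => s ∩ B j) := fun i j hij =>
    (hB.2.1 hij).mono Set.inter_subset_right Set.inter_subset_right
  conv_rhs => rw [← Set.inter_univ s, ← hB.2.2, Set.inter_iUnion,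
    measure_iUnion hdisj fun j => hs.inter (hB.1 j), tsum_fintype]

lemma sum_sum_toReal_measure_inter {A : Fin I → Set Ω} {B : Fin J → Set Ω}
    (hA : IsPartition mΩ A) (hB : IsPartition mΩ B) (P : Measure Ω) [IsProbabilityMeasure P] :
    ∑ i, ∑ j, (P (A i ∩ B j)).toReal = 1 := by
  have hrow : ∀ i, ∑ j, (P (A i ∩ B j)).toReal = (P (A i)).toReal := fun i => by
    rw [← ENNReal.toReal_sum fun j _ => measure_ne_top P _, hB.sum_measure_inter P (hA.1 i)]
  have hcol : ∑ i, P (A i) = 1 := by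
    simpa using hA.sum_measure_inter P MeasurableSet.univ
  simp_rw [hrow, ← ENNReal.toReal_sum fun i _ => measure_ne_top P _, hcol, ENNReal.toReal_one]

end IsPartition

lemma infoDep_le_ofReal_log_psiStarDep {mΩ : MeasurableSpace Ω} (P : Measure Ω)
    [IsProbabilityMeasure P] {𝒜 𝒝 : MeasurableSpace Ω} (h𝒜 : 𝒜 ≤ mΩ) (h𝒝 : 𝒝 ≤ mΩ)
    (hψ : psiStarDep P 𝒜 𝒝 ≠ ⊤) :
    infoDep P 𝒜 𝒝 ≤ ENNReal.ofReal (Real.log (psiStarDep P 𝒜 𝒝).toReal) := by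
  refine iSup_le fun I => iSup_le fun J => iSup_le fun A => iSup_le fun B =>
    iSup_le fun hA => iSup_le fun hB => ENNReal.ofReal_le_ofReal ?_
  have hA' : IsPartition mΩ A := ⟨fun i => h𝒜 _ (hA.1 i), hA.2⟩
  have hB' : IsPartition mΩ B := ⟨fun j => h𝒝 _ (hB.1 j), hB.2⟩
  calc ∑ i, ∑ j, (P (A i ∩ B j)).toReal *
        Real.log ((P (A i ∩ B j)).toReal / ((P (A i)).toReal * (P (B j)).toReal))
      ≤ ∑ i, ∑ j, (P (A i ∩ B j)).toReal * Real.log (psiStarDep P 𝒜 𝒝).toReal :=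
        Finset.sum_le_sum fun i _ => Finset.sum_le_sum fun j _ =>
          toReal_mul_log_div_le P hψ (hA.1 i) (hB.1 j)
    _ = Real.log (psiStarDep P 𝒜 𝒝).toReal := by
        simp_rw [← Finset.sum_mul, hA'.sum_sum_toReal_measure_inter hB' P, one_mul]

/-- if `ψ*(𝒜,𝒝) < ∞` then `I(𝒜,𝒝) ≤ ψ*(𝒜,𝒝)·log ψ*(𝒜,𝒝)`. -/
theorem info_le_psiStar_mul_log_psiStar
    {Ω : Type*} {mΩ : MeasurableSpace Ω} (P : Measure Ω) [IsProbabilityMeasure P]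
    (𝒜 𝒝 : MeasurableSpace Ω) (h𝒜 : 𝒜 ≤ mΩ) (h𝒝 : 𝒝 ≤ mΩ)
    (hfin : psiStarDep P 𝒜 𝒝 < ⊤) :
    infoDep P 𝒜 𝒝 ≤
      ENNReal.ofReal ((psiStarDep P 𝒜 𝒝).toReal * Real.log (psiStarDep P 𝒜 𝒝).toReal) := by
  have hK : 1 ≤ (psiStarDep P 𝒜 𝒝).toReal := by
    simpa using ENNReal.toReal_mono hfin.ne (one_le_psiStarDep P)
  calc infoDep P 𝒜 𝒝 ≤ ENNReal.ofReal (Real.log (psiStarDep P 𝒜 𝒝).toReal) :=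
        infoDep_le_ofReal_log_psiStarDep P h𝒜 h𝒝 hfin.ne
    _ ≤ _ := ENNReal.ofReal_le_ofReal (le_mul_of_one_le_left (Real.log_nonneg hK) hK)

end StrongMixing
end
end

section
/- Let (Ω, F, P) be a probability space and let A and B be sub-σ-fields of F. Then β(A,B) ≤ [I(A,B)]^{1/2} (Volkonskii–Rozanov inequality; trivially true if I(A,B) = ∞). -/
open MeasureTheory ProbabilityTheory ENNReal Filter

noncomputable section

/-!
On a pair of finite partitions, the quantity in `β` is the total variation distance
between the joint law `p (i, j) = P (Aᵢ ∩ Bⱼ)` and the product of its marginals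
`q (i, j) = P Aᵢ * P Bⱼ`, and the quantity in `I` is the Kullback–Leibler divergence of `p`
from `q`. So it suffices to prove the weak Pinsker inequality `(∑ |p - q|)² ≤ 4 KL(p ‖ q)`.
Pointwise, `(p - q)² ≤ 2 (p + q) · q klFun (p / q)`, which comes down to
`(t - 1)² ≤ 2 max t 1 · klFun t`, proved by monotonicity on either side of `t = 1`;
Cauchy–Schwarz with the weights `2 (p + q)`, of total mass `4`, then sums it up.
-/

namespace InformationTheory

open Real

lemma monotoneOn_two_mul_mul_klFun_sub_sq :
    MonotoneOn (fun t ↦ 2 * t * klFun t - (t - 1) ^ 2) (Set.Ici 0) := by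
  refine monotoneOn_of_hasDerivWithinAt_nonneg (f' := fun t ↦ 4 * klFun t) (convex_Ici 0)
    (by fun_prop) (fun t ht ↦ ?_) (fun t ht ↦ ?_)
  all_goals rw [interior_Ici] at ht
  · have h := (((hasDerivAt_id' t).const_mul 2).fun_mul (hasDerivAt_klFun ht.ne')).fun_sub
      (((hasDerivAt_id' t).sub_const 1).fun_pow 2)
    refine (h.congr_deriv ?_).hasDerivWithinAt
    simp only [klFun_apply]
    ring
  · have := klFun_nonneg ht.le
    positivity

lemma antitoneOn_two_mul_klFun_sub_sq :
    AntitoneOn (fun t ↦ 2 * klFun t - (t - 1) ^ 2) (Set.Ici 0) := by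
  refine antitoneOn_of_hasDerivWithinAt_nonpos (f' := fun t ↦ 2 * (log t - (t - 1)))
    (convex_Ici 0) (by fun_prop) (fun t ht ↦ ?_) (fun t ht ↦ ?_)
  all_goals rw [interior_Ici] at ht
  · have h := ((hasDerivAt_klFun ht.ne').const_mul 2).fun_sub
      (((hasDerivAt_id' t).sub_const 1).fun_pow 2)
    refine (h.congr_deriv ?_).hasDerivWithinAt
    ring
  · linarith [log_le_sub_one_of_pos ht]

lemma sq_sub_one_le_two_mul_max_mul_klFun {t : ℝ} (ht : 0 ≤ t) :
    (t - 1) ^ 2 ≤ 2 * max t 1 * klFun t := by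
  rcases le_total t 1 with h | h
  · have := antitoneOn_two_mul_klFun_sub_sq ht (zero_le_one' ℝ) h
    simp only [klFun_one] at this
    rw [max_eq_right h]
    linarith
  · have := monotoneOn_two_mul_mul_klFun_sub_sq (zero_le_one' ℝ) ht h
    simp only [klFun_one] at this
    rw [max_eq_left h]
    linarith

lemma sq_sub_le_two_mul_add_mul_mul_klFun {p q : ℝ} (hp : 0 ≤ p) (hq : 0 < q) :
    (p - q) ^ 2 ≤ 2 * (p + q) * (q * klFun (p / q)) := by
  have ht : 0 ≤ p / q := div_nonneg hp hq.le
  have hmax : q * max (p / q) 1 ≤ p + q := by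
    rw [mul_max_of_nonneg _ _ hq.le, mul_div_cancel₀ _ hq.ne', mul_one]
    exact max_le_add_of_nonneg hp hq.le
  calc (p - q) ^ 2 = q ^ 2 * (p / q - 1) ^ 2 := by field_simp
    _ ≤ q ^ 2 * (2 * max (p / q) 1 * klFun (p / q)) :=
      mul_le_mul_of_nonneg_left (sq_sub_one_le_two_mul_max_mul_klFun ht) (sq_nonneg q)
    _ = 2 * (q * max (p / q) 1) * (q * klFun (p / q)) := by ring
    _ ≤ 2 * (p + q) * (q * klFun (p / q)) := by
      gcongr
      exact mul_nonneg hq.le (klFun_nonneg ht)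

lemma mul_klFun_div {p q : ℝ} (hpq : q = 0 → p = 0) :
    q * klFun (p / q) = p * log (p / q) + q - p := by
  rcases eq_or_ne q 0 with hq | hq
  · simp [hq, hpq hq]
  · rw [klFun_apply]
    field_simp

theorem sq_sum_abs_sub_le_four_mul_sum_mul_log {ι : Type*} [Fintype ι] {p q : ι → ℝ}
    (hp : ∀ k, 0 ≤ p k) (hq : ∀ k, 0 ≤ q k) (hpq : ∀ k, q k = 0 → p k = 0)
    (hp1 : ∑ k, p k = 1) (hq1 : ∑ k, q k = 1) :
    (∑ k, |p k - q k|) ^ 2 ≤ 4 * ∑ k, p k * log (p k / q k) := by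
  set f : ι → ℝ := fun k ↦ q k * klFun (p k / q k)
  have hf : ∀ k, 0 ≤ f k := fun k ↦ mul_nonneg (hq k) (klFun_nonneg (div_nonneg (hp k) (hq k)))
  have hsq : ∀ k, |p k - q k| ^ 2 ≤ 2 * (p k + q k) * f k := fun k ↦ by
    rw [sq_abs]
    rcases (hq k).eq_or_lt with hq0 | hq0
    · simp [f, ← hq0, hpq k hq0.symm]
    · exact sq_sub_le_two_mul_add_mul_mul_klFun (hp k) hq0
  have hweight : ∑ k, 2 * (p k + q k) = 4 := by
    rw [← Finset.mul_sum, Finset.sum_add_distrib, hp1, hq1]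
    norm_num
  have hsum_f : ∑ k, f k = ∑ k, p k * log (p k / q k) := by
    simp only [f, mul_klFun_div (hpq _), Finset.sum_sub_distrib, Finset.sum_add_distrib, hp1, hq1]
    ring
  calc (∑ k, |p k - q k|) ^ 2 ≤ (∑ k, 2 * (p k + q k)) * ∑ k, f k :=
        Finset.sum_sq_le_sum_mul_sum_of_sq_le_mul _
          (fun k _ ↦ by linarith [hp k, hq k]) (fun k _ ↦ hf k) (fun k _ ↦ hsq k)
    _ = 4 * ∑ k, p k * log (p k / q k) := by rw [hweight, hsum_f]

end InformationTheory

namespace StrongMixing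

open Real

variable {Ω : Type*}

lemma IsPartition.sum_measureReal_inter {I : ℕ} {m mΩ : MeasurableSpace Ω} {A : Fin I → Set Ω}
    (hA : IsPartition m A) (hm : m ≤ mΩ) (P : Measure Ω) [IsFiniteMeasure P] {s : Set Ω}
    (hs : MeasurableSet s) : ∑ i, P.real (s ∩ A i) = P.real s := by
  have h := measure_iUnion (μ := P)
    (fun i j hij ↦ (hA.2.1 hij).mono Set.inter_subset_right Set.inter_subset_right)
    (fun i ↦ hs.inter (hm _ (hA.1 i)))
  rw [← Set.inter_iUnion, hA.2.2, Set.inter_univ, tsum_fintype] at h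
  rw [measureReal_def, h, ENNReal.toReal_sum fun i _ ↦ measure_ne_top P _]
  rfl

lemma IsPartition.sum_measureReal {I : ℕ} {m mΩ : MeasurableSpace Ω} {A : Fin I → Set Ω}
    (hA : IsPartition m A) (hm : m ≤ mΩ) (P : Measure Ω) [IsProbabilityMeasure P] :
    ∑ i, P.real (A i) = 1 := by
  simpa using hA.sum_measureReal_inter hm P MeasurableSet.univ

theorem IsPartition.sq_sum_abs_sub_le_four_mul_sum_mul_log {I J : ℕ} {𝒜 𝒝 mΩ : MeasurableSpace Ω}
    {A : Fin I → Set Ω} {B : Fin J → Set Ω} (hA : IsPartition 𝒜 A) (hB : IsPartition 𝒝 B)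
    (h𝒜 : 𝒜 ≤ mΩ) (h𝒝 : 𝒝 ≤ mΩ) (P : Measure Ω) [IsProbabilityMeasure P] :
    (∑ i, ∑ j, |P.real (A i ∩ B j) - P.real (A i) * P.real (B j)|) ^ 2 ≤
      4 * ∑ i, ∑ j, P.real (A i ∩ B j) *
        log (P.real (A i ∩ B j) / (P.real (A i) * P.real (B j))) := by
  set p : Fin I × Fin J → ℝ := fun k ↦ P.real (A k.1 ∩ B k.2)
  set q : Fin I × Fin J → ℝ := fun k ↦ P.real (A k.1) * P.real (B k.2)
  have hpq : ∀ k, q k = 0 → p k = 0 := fun k hk ↦ by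
    refine le_antisymm ?_ measureReal_nonneg
    rcases mul_eq_zero.1 hk with h | h
    · exact h ▸ measureReal_mono Set.inter_subset_left
    · exact h ▸ measureReal_mono Set.inter_subset_right
  have hp1 : ∑ k, p k = 1 := by
    simp only [p, Fintype.sum_prod_type, hB.sum_measureReal_inter h𝒝 P (h𝒜 _ (hA.1 _)),
      hA.sum_measureReal h𝒜 P]
  have hq1 : ∑ k, q k = 1 := by
    simp only [q, Fintype.sum_prod_type, ← Finset.mul_sum, ← Finset.sum_mul,
      hA.sum_measureReal h𝒜 P, hB.sum_measureReal h𝒝 P, one_mul]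
  simpa only [Fintype.sum_prod_type] using
    InformationTheory.sq_sum_abs_sub_le_four_mul_sum_mul_log (fun _ ↦ measureReal_nonneg)
      (fun _ ↦ mul_nonneg measureReal_nonneg measureReal_nonneg) hpq hp1 hq1

/-- the Volkonskii–Rozanov inequality `β(𝒜,𝒝) ≤ I(𝒜,𝒝)^{1/2}`. -/
theorem beta_le_sqrt_info
    {Ω : Type*} {mΩ : MeasurableSpace Ω} (P : Measure Ω) [IsProbabilityMeasure P]
    (𝒜 𝒝 : MeasurableSpace Ω) (h𝒜 : 𝒜 ≤ mΩ) (h𝒝 : 𝒝 ≤ mΩ) :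
    betaDep P 𝒜 𝒝 ≤ infoDep P 𝒜 𝒝 ^ ((1 : ℝ) / 2) := by
  refine iSup_le fun I ↦ iSup_le fun J ↦ iSup_le fun A ↦ iSup_le fun B ↦
    iSup_le fun hA ↦ iSup_le fun hB ↦ ?_
  set KL := ∑ i, ∑ j, (P (A i ∩ B j)).toReal *
    log ((P (A i ∩ B j)).toReal / ((P (A i)).toReal * (P (B j)).toReal))
  set TV := ∑ i, ∑ j, |(P (A i ∩ B j)).toReal - (P (A i)).toReal * (P (B j)).toReal|
  have hpinsker : TV ^ 2 ≤ 4 * KL := hA.sq_sum_abs_sub_le_four_mul_sum_mul_log hB h𝒜 h𝒝 P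
  have hKL : 0 ≤ KL := by nlinarith [sq_nonneg TV]
  have hKL_le : ENNReal.ofReal KL ≤ infoDep P 𝒜 𝒝 :=
    le_iSup_of_le I <| le_iSup_of_le J <| le_iSup_of_le A <| le_iSup_of_le B <|
      le_iSup_of_le hA <| le_iSup_of_le hB le_rfl
  calc ENNReal.ofReal (1 / 2 * TV) ≤ ENNReal.ofReal √KL :=
        ENNReal.ofReal_le_ofReal <| (le_sqrt (by positivity) hKL).2 (by nlinarith)
    _ = ENNReal.ofReal KL ^ ((1 : ℝ) / 2) := by
        rw [sqrt_eq_rpow, ENNReal.ofReal_rpow_of_nonneg hKL (by norm_num)]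
    _ ≤ infoDep P 𝒜 𝒝 ^ ((1 : ℝ) / 2) := ENNReal.rpow_le_rpow hKL_le (by norm_num)

end StrongMixing
end
end

section
/- Let (Ω, F, P) be a probability space and let A and B be sub-σ-fields of F. Then α(A,B) ≤ 4·ρ_cond(A,B). -/
open MeasureTheory ProbabilityTheory ENNReal Filter

noncomputable section

namespace StrongMixing

variable {Ω : Type*}

/-!
Testing the maximal correlation on indicators gives, for every probability measure `Q`,
`4 |Q (A ∩ B) - Q A * Q B| ≤ ρ_Q(𝒜, 𝒝)`, since an indicator has variance at most `1 / 4`.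
If `P D ≥ 1 - ε`, then `P` and `P[|D]` differ by at most `P Dᶜ ≤ ε` on every event, which moves
`P (A ∩ B) - P A * P B` by at most `3 ε`; so `α(𝒜, 𝒝) ≤ ε / 4 + 3 ε ≤ 4 ε`.
-/

section

variable {mΩ : MeasurableSpace Ω} {μ ν : Measure Ω} {A B D : Set Ω}

lemma alphaDep_le {𝒜 𝒝 : MeasurableSpace Ω} {c : ℝ≥0∞}
    (h : ∀ A, MeasurableSet[𝒜] A → ∀ B, MeasurableSet[𝒝] B →
      ENNReal.ofReal |μ.real (A ∩ B) - μ.real A * μ.real B| ≤ c) :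
    alphaDep μ 𝒜 𝒝 ≤ c :=
  iSup₂_le fun A hA => iSup₂_le fun B hB => h A hA B hB

lemma alphaDep_le_one [IsZeroOrProbabilityMeasure μ] (𝒜 𝒝 : MeasurableSpace Ω) :
    alphaDep μ 𝒜 𝒝 ≤ 1 :=
  alphaDep_le fun _ _ _ _ => ENNReal.ofReal_le_one.2 <|
    abs_sub_le_of_nonneg_of_le measureReal_nonneg measureReal_le_one
      (mul_nonneg measureReal_nonneg measureReal_nonneg)
      (mul_le_one₀ measureReal_le_one measureReal_nonneg measureReal_le_one)

lemma le_rhoDep {𝒜 𝒝 : MeasurableSpace Ω} {f g : Ω → ℝ}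
    (hf : Measurable[𝒜] f) (hg : Measurable[𝒝] g)
    (hf₂ : MemLp f 2 μ) (hg₂ : MemLp g 2 μ) (hvf : 0 < varP μ f) (hvg : 0 < varP μ g) :
    ENNReal.ofReal |covP μ f g / (√(varP μ f) * √(varP μ g))| ≤ rhoDep μ 𝒜 𝒝 :=
  le_iSup₂_of_le f g <| le_iSup₂_of_le hf hg <| le_iSup₂_of_le hf₂ hg₂ <|
    le_iSup₂_of_le hvf hvg le_rfl

lemma covP_indicator_one [IsProbabilityMeasure μ] (hA : MeasurableSet A) (hB : MeasurableSet B) :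
    covP μ (A.indicator 1) (B.indicator 1) = μ.real (A ∩ B) - μ.real A * μ.real B := by
  change cov[A.indicator 1, B.indicator 1; μ] = _
  rw [covariance_eq_sub (X := A.indicator 1) (Y := B.indicator 1)
      (memLp_indicator_const 2 hA 1 (by simp)) (memLp_indicator_const 2 hB 1 (by simp)),
    ← Set.inter_indicator_one,
    integral_indicator_one hA, integral_indicator_one hB, integral_indicator_one (hA.inter hB)]

lemma varP_indicator_one [IsProbabilityMeasure μ] (hA : MeasurableSet A) :
    varP μ (A.indicator 1) = μ.real A * (1 - μ.real A) := by
  rw [varP, covP_indicator_one hA hA, Set.inter_self]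
  ring

lemma varP_indicator_one_pos [IsProbabilityMeasure μ] (hA : MeasurableSet A)
    (h0 : μ.real A ≠ 0) (h1 : μ.real A ≠ 1) : 0 < varP μ (A.indicator 1) := by
  rw [varP_indicator_one hA]
  exact mul_pos (measureReal_nonneg.lt_of_ne' h0) (sub_pos.2 (measureReal_le_one.lt_of_ne h1))

lemma sqrt_varP_indicator_one_le [IsProbabilityMeasure μ] (hA : MeasurableSet A) :
    √(varP μ (A.indicator 1)) ≤ 1 / 2 := by
  rw [varP_indicator_one hA, Real.sqrt_le_left (by norm_num)]
  nlinarith [sq_nonneg (μ.real A - 1 / 2)]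

lemma measureReal_inter_eq_mul_of_eq_zero_or_one [IsProbabilityMeasure μ]
    (hA : MeasurableSet A) (h : μ.real A = 0 ∨ μ.real A = 1) (B : Set Ω) :
    μ.real (A ∩ B) = μ.real A * μ.real B := by
  rcases h with h | h
  · rw [h, zero_mul]
    exact measureReal_mono_null Set.inter_subset_left h
  · rw [h, one_mul, Set.inter_comm]
    exact congrArg ENNReal.toReal (measure_inter_conull
      ((prob_compl_eq_zero_iff hA).2 ((ENNReal.toReal_eq_one_iff _).1 h)))

lemma ofReal_four_mul_abs_measureReal_inter_sub_le_rhoDep [IsProbabilityMeasure μ]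
    {𝒜 𝒝 : MeasurableSpace Ω} (h𝒜 : 𝒜 ≤ mΩ) (h𝒝 : 𝒝 ≤ mΩ)
    (hA : MeasurableSet[𝒜] A) (hB : MeasurableSet[𝒝] B) :
    ENNReal.ofReal (4 * |μ.real (A ∩ B) - μ.real A * μ.real B|) ≤ rhoDep μ 𝒜 𝒝 := by
  have hAm : MeasurableSet[mΩ] A := h𝒜 A hA
  have hBm : MeasurableSet[mΩ] B := h𝒝 B hB
  by_cases hA01 : μ.real A = 0 ∨ μ.real A = 1
  · simp [measureReal_inter_eq_mul_of_eq_zero_or_one hAm hA01 B]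
  by_cases hB01 : μ.real B = 0 ∨ μ.real B = 1
  · simp [Set.inter_comm A, measureReal_inter_eq_mul_of_eq_zero_or_one hBm hB01 A, mul_comm]
  rw [not_or] at hA01 hB01
  have hvA := varP_indicator_one_pos hAm hA01.1 hA01.2
  have hvB := varP_indicator_one_pos hBm hB01.1 hB01.2
  have hsA := sqrt_varP_indicator_one_le (μ := μ) hAm
  have hsB := sqrt_varP_indicator_one_le (μ := μ) hBm
  refine le_trans (ENNReal.ofReal_le_ofReal ?_) (le_rhoDep (f := A.indicator 1)
    (g := B.indicator 1) (measurable_const.indicator hA) (measurable_const.indicator hB)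
    (memLp_indicator_const 2 hAm 1 (by simp)) (memLp_indicator_const 2 hBm 1 (by simp)) hvA hvB)
  set c := μ.real (A ∩ B) - μ.real A * μ.real B
  set σA := √(varP μ (A.indicator 1))
  set σB := √(varP μ (B.indicator 1))
  have hσ : 0 < σA * σB := by positivity
  rw [covP_indicator_one hAm hBm, abs_div, abs_of_pos hσ, le_div_iff₀ hσ]
  calc 4 * |c| * (σA * σB) ≤ 4 * |c| * (1 / 2 * (1 / 2)) := by gcongr
    _ = |c| := by ring

lemma abs_measureReal_sub_cond_le [IsProbabilityMeasure μ] (hD : MeasurableSet D)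
    (hD0 : μ D ≠ 0) (F : Set Ω) : |μ.real F - μ[|D].real F| ≤ μ.real Dᶜ := by
  have hd : 0 < μ.real D := ENNReal.toReal_pos hD0 (measure_ne_top _ _)
  have hcond : μ[|D].real F = μ.real (F ∩ D) / μ.real D := by
    rw [Measure.real, cond_apply hD, ENNReal.toReal_mul, ENNReal.toReal_inv, Set.inter_comm,
      div_eq_inv_mul, measureReal_def, measureReal_def]
  have hx : μ.real (F ∩ D) ≤ μ.real D := measureReal_mono Set.inter_subset_right
  have hy : μ.real (F \ D) ≤ μ.real Dᶜ := measureReal_mono (Set.sdiff_subset_compl F D)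
  rw [hcond, ← measureReal_inter_add_sdiff (s := F) hD]
  rw [probReal_compl_eq_one_sub hD] at hy ⊢
  set q := μ.real (F ∩ D) / μ.real D
  have hq : μ.real (F ∩ D) = q * μ.real D := (div_mul_cancel₀ _ hd.ne').symm
  have hq0 : 0 ≤ q := by positivity
  have hq1 : q ≤ 1 := (div_le_one hd).2 hx
  rw [hq, abs_le]
  constructor <;> nlinarith [measureReal_nonneg (μ := μ) (s := F \ D)]

lemma abs_measureReal_inter_sub_mul_le_of_abs_sub_le [IsZeroOrProbabilityMeasure μ]
    [IsZeroOrProbabilityMeasure ν] {δ : ℝ} (h : ∀ F, |μ.real F - ν.real F| ≤ δ) (A B : Set Ω) :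
    |μ.real (A ∩ B) - μ.real A * μ.real B| ≤ |ν.real (A ∩ B) - ν.real A * ν.real B| + 3 * δ := by
  have hprod : |μ.real A * μ.real B - ν.real A * ν.real B| ≤ 2 * δ :=
    calc |μ.real A * μ.real B - ν.real A * ν.real B|
        = |(μ.real A - ν.real A) * μ.real B + ν.real A * (μ.real B - ν.real B)| := by
          congr 1; ring
      _ ≤ |μ.real A - ν.real A| * μ.real B + ν.real A * |μ.real B - ν.real B| := by
        refine (abs_add_le _ _).trans_eq ?_
        rw [abs_mul, abs_mul, abs_of_nonneg measureReal_nonneg, abs_of_nonneg measureReal_nonneg]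
      _ ≤ δ * 1 + 1 * δ := by
        have hδ : 0 ≤ δ := (abs_nonneg _).trans (h A)
        gcongr
        exacts [h A, measureReal_le_one, measureReal_le_one, h B]
      _ = 2 * δ := by ring
  calc |μ.real (A ∩ B) - μ.real A * μ.real B|
      = |(μ.real (A ∩ B) - ν.real (A ∩ B)) + (ν.real (A ∩ B) - ν.real A * ν.real B)
          - (μ.real A * μ.real B - ν.real A * ν.real B)| := by congr 1; ring
    _ ≤ |μ.real (A ∩ B) - ν.real (A ∩ B)| + |ν.real (A ∩ B) - ν.real A * ν.real B|
          + |μ.real A * μ.real B - ν.real A * ν.real B| :=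
        (abs_sub _ _).trans (add_le_add_left (abs_add_le _ _) _)
    _ ≤ |ν.real (A ∩ B) - ν.real A * ν.real B| + 3 * δ := by linarith [h (A ∩ B)]

lemma alphaDep_le_four_mul_of_rhoDep_cond_le [IsProbabilityMeasure μ] {𝒜 𝒝 : MeasurableSpace Ω}
    (h𝒜 : 𝒜 ≤ mΩ) (h𝒝 : 𝒝 ≤ mΩ) {ε : ℝ≥0∞} (hε : ε < 1) (hD : MeasurableSet[mΩ] D)
    (hμD : 1 - ε ≤ μ D) (hρ : rhoDep μ[|D] 𝒜 𝒝 ≤ ε) :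
    alphaDep μ 𝒜 𝒝 ≤ 4 * ε := by
  have hD0 : μ D ≠ 0 := ((tsub_pos_of_lt hε).trans_le hμD).ne'
  have := cond_isProbabilityMeasure (μ := μ) hD0
  have hε_top : ε ≠ ∞ := ne_top_of_lt hε
  have hDc : μ.real Dᶜ ≤ ε.toReal := by
    refine ENNReal.toReal_mono hε_top ?_
    rw [prob_compl_eq_one_sub hD, tsub_le_iff_left]
    exact tsub_le_iff_right.1 hμD
  refine alphaDep_le fun A hA B hB => ?_
  have hcond : 4 * |μ[|D].real (A ∩ B) - μ[|D].real A * μ[|D].real B| ≤ ε.toReal :=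
    (ENNReal.ofReal_le_iff_le_toReal hε_top).1
      ((ofReal_four_mul_abs_measureReal_inter_sub_le_rhoDep h𝒜 h𝒝 hA hB).trans hρ)
  have hpert := abs_measureReal_inter_sub_mul_le_of_abs_sub_le
    (abs_measureReal_sub_cond_le hD hD0) A B
  rw [ENNReal.ofReal_le_iff_le_toReal (ENNReal.mul_ne_top ofNat_ne_top hε_top),
    ENNReal.toReal_mul, ENNReal.toReal_ofNat]
  linarith [ε.toReal_nonneg]

end

/-- `α(𝒜,𝒝) ≤ 4·ρ_cond(𝒜,𝒝)`. -/
theorem alpha_le_four_rhoCond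
    {Ω : Type*} {mΩ : MeasurableSpace Ω} (P : Measure Ω) [IsProbabilityMeasure P]
    (𝒜 𝒝 : MeasurableSpace Ω) (h𝒜 : 𝒜 ≤ mΩ) (h𝒝 : 𝒝 ≤ mΩ) :
    alphaDep P 𝒜 𝒝 ≤ 4 * rhoCondDep P 𝒜 𝒝 := by
  rw [rhoCondDep, sInf_eq_iInf', ENNReal.mul_iInf_of_ne four_ne_zero ofNat_ne_top]
  refine le_iInf fun ⟨ε, hε⟩ => ?_
  rcases hε with rfl | ⟨-, hε1, D, hD, hPD, hρ⟩
  · exact (alphaDep_le_one 𝒜 𝒝).trans (by norm_num)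
  · exact alphaDep_le_four_mul_of_rhoDep_cond_le h𝒜 h𝒝 hε1 (h𝒜 D hD) hPD hρ

end StrongMixing
end
end

section
/- Let X = (X_k, k ∈ ℤ) be a strictly stationary sequence of real random variables. Then β*(n) → 0 as n → ∞ if and only if there exists an integer m ≥ 0 such that X is m-dependent. -/
open MeasureTheory ProbabilityTheory ENNReal Filter

noncomputable section

namespace StrongMixing

variable {Ω : Type*}

/-!
If `X` is `m`-dependent, the σ-fields of two index sets at distance `> m` are independent
(induction over finite windows, splitting at the last index), so `β*(n) = 0` for `n > m`.

Conversely, `β(𝒜, 𝒝)` dominates the distance between the joint law of any finite-valued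
`𝒜`- and `𝒝`-measurable pair `(f, g)` and the product of its marginals. If `X` is not
`m`-dependent for any `m`, then for every `n` there are events `U`, `V` depending on finitely many
coordinates at distance `≥ n` with `P(U ∩ V) ≠ P(U) P(V)`. Stationarity lets us place `K`
translates of `(U, V)` so far apart that `β*(N) ≤ η` makes different translates nearly
independent. By Chebyshev, the number of translates in which both events occur concentrates
around `K P(U ∩ V)` under `P`, but around `K P(U) P(V)` under the product of the marginals; hence
`β*(n) ≥ 1/2` for every `n`, and `β*(n) ↛ 0`.
-/

section SigmaOn

variable (X : ℤ → Ω → ℝ)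

lemma comap_le_sigmaOn {S : Set ℤ} {k : ℤ} (hk : k ∈ S) :
    MeasurableSpace.comap (X k) inferInstance ≤ sigmaOn X S :=
  le_iSup₂ (f := fun k (_ : k ∈ S) => MeasurableSpace.comap (X k) inferInstance) k hk

lemma sigmaOn_mono {S T : Set ℤ} (h : S ⊆ T) : sigmaOn X S ≤ sigmaOn X T :=
  iSup₂_le fun _ hk => comap_le_sigmaOn X (h hk)

lemma sigmaOn_le {mΩ : MeasurableSpace Ω} {X : ℤ → Ω → ℝ} (hX : ∀ k, Measurable (X k))
    (S : Set ℤ) : sigmaOn X S ≤ mΩ :=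
  iSup₂_le fun k _ => (hX k).comap_le

@[simp]
lemma sigmaOn_empty : sigmaOn X ∅ = ⊥ := by
  simp [sigmaOn]

lemma sigmaOn_union (S T : Set ℤ) : sigmaOn X (S ∪ T) = sigmaOn X S ⊔ sigmaOn X T :=
  iSup_union

lemma sigmaOn_comp_add (t : ℤ) (S : Set ℤ) :
    sigmaOn (fun k => X (k + t)) S = sigmaOn X ((· + t) '' S) := by
  simp only [sigmaOn, iSup_image]

lemma sigmaOn_eq_comap_coord (S : Set ℤ) :
    sigmaOn X S = (sigmaOn (fun k (y : ℤ → ℝ) => y k) S).comap (fun ω k => X k ω) := by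
  simp only [sigmaOn, MeasurableSpace.comap_iSup, MeasurableSpace.comap_comp]
  rfl

end SigmaOn

section Independence

variable {mΩ : MeasurableSpace Ω} {μ : Measure Ω}

lemma indep_sup_right_of_indep_sup [IsZeroOrProbabilityMeasure μ] {m₁ m₂ m₃ : MeasurableSpace Ω}
    (h₁ : m₁ ≤ mΩ) (h₂ : m₂ ≤ mΩ) (h₃ : m₃ ≤ mΩ) (h₁₂ : Indep m₁ m₂ μ)
    (h₁₂₃ : Indep (m₁ ⊔ m₂) m₃ μ) : Indep m₁ (m₂ ⊔ m₃) μ := by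
  set p : Set (Set Ω) :=
    {s | ∃ b c, MeasurableSet[m₂] b ∧ MeasurableSet[m₃] c ∧ s = b ∩ c}
  have hp : IsPiSystem p := by
    rintro _ ⟨b, c, hb, hc, rfl⟩ _ ⟨b', c', hb', hc', rfl⟩ -
    exact ⟨b ∩ b', c ∩ c', hb.inter hb', hc.inter hc', Set.inter_inter_inter_comm b c b' c'⟩
  have hgen : m₂ ⊔ m₃ = MeasurableSpace.generateFrom p := by
    refine le_antisymm (sup_le (fun b hb => ?_) (fun c hc => ?_)) ?_
    · exact MeasurableSpace.measurableSet_generateFrom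
        ⟨b, Set.univ, hb, .univ, (Set.inter_univ b).symm⟩
    · exact MeasurableSpace.measurableSet_generateFrom
        ⟨Set.univ, c, .univ, hc, (Set.univ_inter c).symm⟩
    · refine MeasurableSpace.generateFrom_le ?_
      rintro _ ⟨b, c, hb, hc, rfl⟩
      exact (le_sup_left (b := m₃) _ hb).inter (le_sup_right (a := m₂) _ hc)
  refine IndepSets.indep h₁ (sup_le h₂ h₃) (@MeasurableSpace.isPiSystem_measurableSet Ω m₁) hp
    (@MeasurableSpace.generateFrom_measurableSet Ω m₁).symm hgen ?_
  rw [IndepSets_iff]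
  rintro a _ ha ⟨b, c, hb, hc, rfl⟩
  have hbc : μ (b ∩ c) = μ b * μ c :=
    (Indep_iff _ _ _).1 h₁₂₃ b c (le_sup_right (a := m₁) _ hb) hc
  calc μ (a ∩ (b ∩ c)) = μ (a ∩ b) * μ c := by
        rw [← Set.inter_assoc]
        exact (Indep_iff _ _ _).1 h₁₂₃ _ _ ((le_sup_left (b := m₂) _ ha).inter
          (le_sup_right (a := m₁) _ hb)) hc
    _ = μ a * μ (b ∩ c) := by
        rw [(Indep_iff _ _ _).1 h₁₂ a b ha hb, hbc, mul_assoc]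

variable [IsProbabilityMeasure μ] {X : ℤ → Ω → ℝ}

lemma indep_sigmaOn_of_forall_finset (hX : ∀ k, Measurable (X k)) {S T : Set ℤ}
    (h : ∀ F G : Finset ℤ, ↑F ⊆ S → ↑G ⊆ T → Indep (sigmaOn X F) (sigmaOn X G) μ) :
    Indep (sigmaOn X S) (sigmaOn X T) μ := by
  let π : ℤ → Set (Set Ω) := fun k =>
    {s | MeasurableSet[(inferInstance : MeasurableSpace ℝ).comap (X k)] s}
  have hπ : ∀ R, IsPiSystem (piiUnionInter π R) := fun R =>
    isPiSystem_piiUnionInter π (fun k => @MeasurableSpace.isPiSystem_measurableSet Ω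
      ((inferInstance : MeasurableSpace ℝ).comap (X k))) R
  have hgen : ∀ R, sigmaOn X R = MeasurableSpace.generateFrom (piiUnionInter π R) := fun R =>
    (generateFrom_piiUnionInter_measurableSet _ R).symm
  have hmeas : ∀ (F : Finset ℤ) (f : ℤ → Set Ω), (∀ k ∈ F, f k ∈ π k) →
      MeasurableSet[sigmaOn X F] (⋂ k ∈ F, f k) := fun F f hf =>
    Finset.measurableSet_biInter _ fun k hk => comap_le_sigmaOn X (Finset.mem_coe.2 hk) _ (hf k hk)
  refine IndepSets.indep (sigmaOn_le hX S) (sigmaOn_le hX T) (hπ S) (hπ T) (hgen S) (hgen T) ?_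
  rw [IndepSets_iff]
  rintro _ _ ⟨F, hF, f, hf, rfl⟩ ⟨G, hG, g, hg, rfl⟩
  exact (Indep_iff _ _ _).1 (h F G hF hG) _ _ (hmeas F f hf) (hmeas G g hg)

lemma exists_measureReal_inter_ne_of_not_indep (hX : ∀ k, Measurable (X k)) {S T : Set ℤ}
    (h : ¬ Indep (sigmaOn X S) (sigmaOn X T) μ) :
    ∃ (F G : Finset ℤ) (U V : Set Ω), ↑F ⊆ S ∧ ↑G ⊆ T ∧ MeasurableSet[sigmaOn X F] U ∧
      MeasurableSet[sigmaOn X G] V ∧ μ.real (U ∩ V) ≠ μ.real U * μ.real V := by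
  contrapose! h
  refine indep_sigmaOn_of_forall_finset hX fun F G hF hG => (Indep_iff _ _ _).2 fun U V hU hV => ?_
  rw [← ENNReal.toReal_eq_toReal_iff' (measure_ne_top _ _) (by finiteness), ENNReal.toReal_mul]
  exact h F G U V hF hG hU hV

end Independence

section MDependence

variable {mΩ : MeasurableSpace Ω} {P : Measure Ω} [IsProbabilityMeasure P] {X : ℤ → Ω → ℝ}
  {m : ℕ}

/-- If the last index of `F ∪ G` lies in `G`, the gap splits `G` into `G⁻ < j := max F` and
`G⁺ ≥ j + m + 1`. Then `σ(F) ⊔ σ(G⁻)` lies in the past of `j` and `σ(G⁺)` in the future after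
`j + m`, while `σ(F) ⊥ σ(G⁻)` by induction on `#F + #G`. -/
lemma MDependent.indep_sigmaOn_finset (hmd : MDependent P X m) (hX : ∀ k, Measurable (X k))
    (F G : Finset ℤ) (hgap : ∀ s ∈ F, ∀ t ∈ G, (m : ℤ) + 1 ≤ |s - t|) :
    Indep (sigmaOn X F) (sigmaOn X G) P := by
  induction hn : F.card + G.card using Nat.strong_induction_on generalizing F G with
  | _ n ih =>
    rcases F.eq_empty_or_nonempty with rfl | hF
    · simpa using indep_bot_left _
    rcases G.eq_empty_or_nonempty with rfl | hG
    · simpa using indep_bot_right _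
    wlog hlt : F.max' hF < G.max' hG generalizing F G
    · have hne : G.max' hG ≠ F.max' hF := fun h => by
        have := hgap _ (F.max'_mem hF) _ (G.max'_mem hG)
        rw [h, sub_self, abs_zero] at this
        omega
      refine (this G F (fun t ht s hs => ?_) (by omega) hG hF
        (lt_of_le_of_ne (not_lt.1 hlt) hne)).symm
      rw [abs_sub_comm]
      exact hgap s hs t ht
    set j := F.max' hF
    set Glo := G.filter (· < j)
    set Ghi := G.filter (j + m + 1 ≤ ·)
    have hGsplit : (G : Set ℤ) ⊆ ↑Glo ∪ ↑Ghi := fun t ht => by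
      rcases le_abs.1 (hgap j (F.max'_mem hF) t ht) with h | h
      · exact Or.inl (Finset.mem_filter.2 ⟨ht, by omega⟩)
      · exact Or.inr (Finset.mem_filter.2 ⟨ht, by omega⟩)
    have hcard : F.card + Glo.card < n := by
      have : Glo.card < G.card := Finset.card_lt_card
        (Finset.filter_ssubset.2 ⟨G.max' hG, G.max'_mem hG, hlt.not_gt⟩)
      omega
    have hpast : sigmaOn X F ⊔ sigmaOn X Glo ≤ sigmaLE X j :=
      sup_le (sigmaOn_mono X fun s hs => F.le_max' s hs)
        (sigmaOn_mono X fun t ht => (Finset.mem_filter.1 ht).2.le)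
    have hfuture : sigmaOn X Ghi ≤ sigmaGE X (j + m + 1) :=
      sigmaOn_mono X fun t ht => (Finset.mem_filter.1 ht).2
    have hlo : Indep (sigmaOn X F) (sigmaOn X Glo) P :=
      ih _ hcard F Glo (fun s hs t ht => hgap s hs t (Finset.mem_filter.1 ht).1) rfl
    refine indep_of_indep_of_le_right ?_ ((sigmaOn_mono X hGsplit).trans_eq (sigmaOn_union X _ _))
    exact indep_sup_right_of_indep_sup (sigmaOn_le hX _) (sigmaOn_le hX _) (sigmaOn_le hX _) hlo
      (indep_of_indep_of_le (hmd j) hpast hfuture)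

lemma MDependent.indep_sigmaOn (hmd : MDependent P X m) (hX : ∀ k, Measurable (X k))
    {S T : Set ℤ} (hgap : ∀ s ∈ S, ∀ t ∈ T, (m : ℤ) + 1 ≤ |s - t|) :
    Indep (sigmaOn X S) (sigmaOn X T) P :=
  indep_sigmaOn_of_forall_finset hX fun F G hF hG =>
    hmd.indep_sigmaOn_finset hX F G fun s hs t ht => hgap s (hF hs) t (hG ht)

end MDependence

section BetaDep

open Function

variable {𝒜 𝒝 : MeasurableSpace Ω} {mΩ : MeasurableSpace Ω} {P : Measure Ω}

lemma betaDep_eq_zero_of_indep (h : Indep 𝒜 𝒝 P) : betaDep P 𝒜 𝒝 = 0 := by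
  refine nonpos_iff_eq_zero.1 (iSup_le fun I => iSup_le fun J => iSup_le fun A => iSup_le fun B =>
    iSup_le fun hA => iSup_le fun hB => ?_)
  have hzero : ∀ i j, (P (A i ∩ B j)).toReal - (P (A i)).toReal * (P (B j)).toReal = 0 :=
    fun i j => by
      rw [(Indep_iff _ _ _).1 h _ _ (hA.1 i) (hB.1 j), ENNReal.toReal_mul, sub_self]
  simp [hzero]

lemma ofReal_half_sum_le_betaDep {ι κ : Type*} [Fintype ι] [Fintype κ] {a : ι → Set Ω}
    {b : κ → Set Ω} (ha : ∀ i, MeasurableSet[𝒜] (a i)) (ha_disj : Pairwise (Disjoint on a))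
    (ha_univ : ⋃ i, a i = Set.univ) (hb : ∀ j, MeasurableSet[𝒝] (b j))
    (hb_disj : Pairwise (Disjoint on b)) (hb_univ : ⋃ j, b j = Set.univ) :
    ENNReal.ofReal ((1 / 2) * ∑ i, ∑ j, |P.real (a i ∩ b j) - P.real (a i) * P.real (b j)|)
      ≤ betaDep P 𝒜 𝒝 := by
  let e := (Fintype.equivFin ι).symm
  let e' := (Fintype.equivFin κ).symm
  have hA : IsPartition 𝒜 (a ∘ e) :=
    ⟨fun i => ha _, fun _ _ h => ha_disj (e.injective.ne h),
      (e.surjective.iUnion_comp a).trans ha_univ⟩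
  have hB : IsPartition 𝒝 (b ∘ e') :=
    ⟨fun j => hb _, fun _ _ h => hb_disj (e'.injective.ne h),
      (e'.surjective.iUnion_comp b).trans hb_univ⟩
  refine le_of_eq_of_le ?_ (le_iSup_of_le _ <| le_iSup_of_le _ <| le_iSup_of_le _ <|
    le_iSup_of_le _ <| le_iSup_of_le hA <| le_iSup_of_le hB le_rfl)
  simp only [Function.comp_apply, ← measureReal_def]
  rw [← e.sum_comp]
  simp_rw [← e'.sum_comp]

lemma ofReal_abs_sub_le_betaDep [IsProbabilityMeasure P] (h𝒜 : 𝒜 ≤ mΩ) (h𝒝 : 𝒝 ≤ mΩ)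
    {ι κ : Type*} [Fintype ι] [Fintype κ] [DecidableEq ι] [DecidableEq κ]
    {f : Ω → ι} {g : Ω → κ}
    (hf : ∀ i, MeasurableSet[𝒜] (f ⁻¹' {i})) (hg : ∀ j, MeasurableSet[𝒝] (g ⁻¹' {j}))
    (Q : Finset (ι × κ)) :
    ENNReal.ofReal |P.real ((fun ω => (f ω, g ω)) ⁻¹' Q) - (P.prod P).real (Prod.map f g ⁻¹' Q)|
      ≤ betaDep P 𝒜 𝒝 := by
  let x : ι × κ → ℝ := fun ij =>
    P.real (f ⁻¹' {ij.1} ∩ g ⁻¹' {ij.2}) - P.real (f ⁻¹' {ij.1}) * P.real (g ⁻¹' {ij.2})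
  have hjoint : ∀ ij : ι × κ,
      (fun ω => (f ω, g ω)) ⁻¹' {ij} = f ⁻¹' {ij.1} ∩ g ⁻¹' {ij.2} := fun ij => by
    ext; simp [Prod.ext_iff]
  have hprod : ∀ ij : ι × κ, Prod.map f g ⁻¹' {ij} = (f ⁻¹' {ij.1}) ×ˢ (g ⁻¹' {ij.2}) :=
    fun ij => by ext; simp [Prod.ext_iff]
  have hdiff : ∀ R : Finset (ι × κ),
      P.real ((fun ω => (f ω, g ω)) ⁻¹' R) - (P.prod P).real (Prod.map f g ⁻¹' R)
        = ∑ ij ∈ R, x ij := by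
    intro R
    rw [← sum_measureReal_preimage_singleton R
        (fun ij _ => hjoint ij ▸ (h𝒜 _ (hf _)).inter (h𝒝 _ (hg _))),
      ← sum_measureReal_preimage_singleton R
        (fun ij _ => hprod ij ▸ (h𝒜 _ (hf _)).prod (h𝒝 _ (hg _))),
      ← Finset.sum_sub_distrib]
    exact Finset.sum_congr rfl fun ij _ => by rw [hjoint, hprod, measureReal_prod_prod]
  have htotal : ∑ ij ∈ Q, x ij + ∑ ij ∈ Qᶜ, x ij = 0 := by
    rw [Finset.sum_add_sum_compl, ← hdiff]
    simp
  have hhalf : |∑ ij ∈ Q, x ij| ≤ (1 / 2) * ∑ ij, |x ij| := by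
    rw [← Finset.sum_add_sum_compl Q (fun ij => |x ij|)]
    have h₁ := Finset.abs_sum_le_sum_abs x Q
    have h₂ := Finset.abs_sum_le_sum_abs x Qᶜ
    rw [eq_neg_of_add_eq_zero_right htotal, abs_neg] at h₂
    linarith
  rw [hdiff]
  refine (ENNReal.ofReal_le_ofReal (hhalf.trans_eq ?_)).trans (ofReal_half_sum_le_betaDep
    (a := fun i => f ⁻¹' {i}) (b := fun j => g ⁻¹' {j}) hf ?_ ?_ hg ?_ ?_)
  · rw [Fintype.sum_prod_type]
  · exact fun i i' h => (Set.disjoint_singleton.2 h).preimage f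
  · exact Set.iUnion_eq_univ_iff.2 fun ω => ⟨f ω, rfl⟩
  · exact fun j j' h => (Set.disjoint_singleton.2 h).preimage g
  · exact Set.iUnion_eq_univ_iff.2 fun ω => ⟨g ω, rfl⟩

lemma ofReal_abs_measureReal_inter_sub_le_betaDep [IsProbabilityMeasure P] (h𝒜 : 𝒜 ≤ mΩ)
    (h𝒝 : 𝒝 ≤ mΩ) {U V : Set Ω} (hU : MeasurableSet[𝒜] U) (hV : MeasurableSet[𝒝] V) :
    ENNReal.ofReal |P.real (U ∩ V) - P.real U * P.real V| ≤ betaDep P 𝒜 𝒝 := by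
  classical
  have hfib : ∀ (m : MeasurableSpace Ω) (W : Set Ω), MeasurableSet[m] W → ∀ b : Bool,
      MeasurableSet[m] ((fun ω => decide (ω ∈ W)) ⁻¹' {b}) := fun m W hW b => by
    cases b
    · convert hW.compl using 1
      ext; simp
    · convert hW using 1
      ext; simp
  have h := ofReal_abs_sub_le_betaDep (P := P) h𝒜 h𝒝 (hfib _ U hU) (hfib _ V hV) {(true, true)}
  have hjoint : (fun ω => (decide (ω ∈ U), decide (ω ∈ V))) ⁻¹' ↑({(true, true)} :
      Finset (Bool × Bool)) = U ∩ V := by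
    ext; simp
  have hprod : Prod.map (fun ω => decide (ω ∈ U)) (fun ω => decide (ω ∈ V)) ⁻¹'
      ↑({(true, true)} : Finset (Bool × Bool)) = U ×ˢ V := by
    ext; simp [Prod.ext_iff]
  rwa [hjoint, hprod, measureReal_prod_prod] at h

end BetaDep

section SecondMoment

variable {α ι : Type*} [MeasurableSpace α] [Fintype ι] {μ : Measure α} [IsProbabilityMeasure μ]

lemma measureReal_le_abs_sum_indicator_sub_le {E : ι → Set α} (hE : ∀ i, MeasurableSet (E i))
    {p d τ : ℝ} (hp : ∀ i, μ.real (E i) = p) (hd : 0 ≤ d)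
    (hpair : Pairwise fun i j => μ.real (E i ∩ E j) ≤ p ^ 2 + d) (hτ : 0 < τ) :
    μ.real {x | τ ≤ |∑ i, (E i).indicator 1 x - Fintype.card ι * p|}
      ≤ (Fintype.card ι / 4 + Fintype.card ι ^ 2 * d) / τ ^ 2 := by
  classical
  have hL2 : ∀ i, MemLp ((E i).indicator (1 : α → ℝ)) 2 μ := fun i =>
    memLp_indicator_const 2 (hE i) 1 (Or.inr (measure_ne_top μ _))
  have hmean : ∫ x, ∑ i, (E i).indicator (1 : α → ℝ) x ∂μ = Fintype.card ι * p := by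
    rw [integral_finsetSum _ fun i _ => (hL2 i).integrable one_le_two]
    simp [integral_indicator_one (hE _), hp]
  have hcov : ∀ i j, cov[(E i).indicator (1 : α → ℝ), (E j).indicator 1; μ]
      = μ.real (E i ∩ E j) - p ^ 2 := fun i j => by
    rw [covariance_eq_sub (hL2 i) (hL2 j), ← Set.inter_indicator_one,
      integral_indicator_one ((hE i).inter (hE j)), integral_indicator_one (hE i),
      integral_indicator_one (hE j), hp, hp, sq]
  have hvar : Var[fun x => ∑ i, (E i).indicator (1 : α → ℝ) x; μ]
      ≤ Fintype.card ι / 4 + Fintype.card ι ^ 2 * d := by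
    rw [variance_fun_sum hL2]
    calc ∑ i, ∑ j, cov[(E i).indicator (1 : α → ℝ), (E j).indicator 1; μ]
        ≤ ∑ i : ι, ∑ j : ι, ((if i = j then 1 / 4 else 0) + d) := by
          refine Finset.sum_le_sum fun i _ => Finset.sum_le_sum fun j _ => ?_
          rw [hcov]
          split_ifs with hij
          · rw [hij, Set.inter_self, hp]
            nlinarith [sq_nonneg (p - 1 / 2)]
          · linarith [hpair hij]
      _ = Fintype.card ι / 4 + Fintype.card ι ^ 2 * d := by
          simp [Finset.sum_add_distrib, Finset.sum_ite_eq]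
          ring
  have hcheb := meas_ge_le_variance_div_sq
    (memLp_finsetSum Finset.univ fun i _ => hL2 i) hτ
  rw [hmean] at hcheb
  refine (ENNReal.toReal_le_of_le_ofReal
    (div_nonneg (variance_nonneg _ _) (sq_nonneg _)) hcheb).trans ?_
  gcongr

lemma one_sub_le_measureReal_abs_sum_indicator_sub_lt {E : ι → Set α}
    (hE : ∀ i, MeasurableSet (E i)) {p d τ : ℝ} (hp : ∀ i, μ.real (E i) = p) (hd : 0 ≤ d)
    (hpair : Pairwise fun i j => μ.real (E i ∩ E j) ≤ p ^ 2 + d) (hτ : 0 < τ) :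
    1 - (Fintype.card ι / 4 + Fintype.card ι ^ 2 * d) / τ ^ 2
      ≤ μ.real {x | |∑ i, (E i).indicator 1 x - Fintype.card ι * p| < τ} := by
  have hm : Measurable fun x => ∑ i, (E i).indicator (1 : α → ℝ) x :=
    Finset.measurable_sum _ fun i _ => measurable_const.indicator (hE i)
  have hE' : MeasurableSet {x | τ ≤ |∑ i, (E i).indicator (1 : α → ℝ) x - Fintype.card ι * p|} :=
    measurableSet_le measurable_const (continuous_abs.measurable.comp (hm.sub_const _))
  have hcompl : {x | |∑ i, (E i).indicator (1 : α → ℝ) x - Fintype.card ι * p| < τ}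
      = {x | τ ≤ |∑ i, (E i).indicator (1 : α → ℝ) x - Fintype.card ι * p|}ᶜ := by
    ext; simp
  rw [hcompl, measureReal_compl hE', probReal_univ]
  linarith [measureReal_le_abs_sum_indicator_sub_le hE hp hd hpair hτ]

lemma measureReal_abs_sum_indicator_sub_lt_le {E : ι → Set α} (hE : ∀ i, MeasurableSet (E i))
    {p d τ r : ℝ} (hp : ∀ i, μ.real (E i) = p) (hd : 0 ≤ d)
    (hpair : Pairwise fun i j => μ.real (E i ∩ E j) ≤ p ^ 2 + d) (hτ : 0 < τ)
    (hr : 2 * τ ≤ |Fintype.card ι * r - Fintype.card ι * p|) :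
    μ.real {x | |∑ i, (E i).indicator 1 x - Fintype.card ι * r| < τ}
      ≤ (Fintype.card ι / 4 + Fintype.card ι ^ 2 * d) / τ ^ 2 := by
  refine (measureReal_mono fun x hx => ?_).trans
    (measureReal_le_abs_sum_indicator_sub_le hE hp hd hpair hτ)
  have := abs_sub_le (Fintype.card ι * r) (∑ i, (E i).indicator (1 : α → ℝ) x)
    (Fintype.card ι * p)
  rw [abs_sub_comm _ (∑ i, _)] at this
  exact (by linarith [hx.out] : τ ≤ _)

end SecondMoment

section Copies

lemma measurable_signature {m : MeasurableSpace Ω} {ι : Type*} {A : ι → Set Ω}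
    [∀ i, DecidablePred (· ∈ A i)] (hA : ∀ i, MeasurableSet[m] (A i)) :
    Measurable[m] fun ω i => decide (ω ∈ A i) :=
  measurable_pi_iff.2 fun i => measurable_to_bool (by convert hA i; ext; simp)

variable {𝒜 𝒝 : MeasurableSpace Ω} {mΩ : MeasurableSpace Ω} {P : Measure Ω}
  [IsProbabilityMeasure P]

lemma ofReal_half_le_betaDep_of_copies (h𝒜 : 𝒜 ≤ mΩ) (h𝒝 : 𝒝 ≤ mΩ) {ι : Type*} [Fintype ι]
    {A B : ι → Set Ω} (hA : ∀ i, MeasurableSet[𝒜] (A i)) (hB : ∀ i, MeasurableSet[𝒝] (B i))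
    {p q r η : ℝ} (hp : ∀ i, P.real (A i) = p) (hq : ∀ i, P.real (B i) = q)
    (hr : ∀ i, P.real (A i ∩ B i) = r) (hη : 0 ≤ η) (hηc : 64 * η ≤ (r - p * q) ^ 2)
    (hK : 16 ≤ Fintype.card ι * (r - p * q) ^ 2)
    (hAA : Pairwise fun i j => P.real (A i ∩ A j) ≤ p ^ 2 + η)
    (hBB : Pairwise fun i j => P.real (B i ∩ B j) ≤ q ^ 2 + η)
    (hAB : Pairwise fun i j => P.real ((A i ∩ B i) ∩ (A j ∩ B j)) ≤ r ^ 2 + η) :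
    ENNReal.ofReal (1 / 2) ≤ betaDep P 𝒜 𝒝 := by
  classical
  set K : ℝ := (Fintype.card ι : ℝ)
  set c := r - p * q
  have hKc : 0 < K * c ^ 2 := by linarith
  have hK0 : 0 < K := pos_of_mul_pos_left hKc (sq_nonneg c)
  have hc : c ≠ 0 := fun h => by simp [h] at hKc
  obtain ⟨i₀⟩ : Nonempty ι := Fintype.card_pos_iff.1 (Nat.cast_pos.1 hK0)
  have hAm : ∀ i, MeasurableSet (A i) := fun i => h𝒜 _ (hA i)
  have hBm : ∀ i, MeasurableSet (B i) := fun i => h𝒝 _ (hB i)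
  have hp01 : 0 ≤ p ∧ p ≤ 1 := hp i₀ ▸ ⟨measureReal_nonneg, measureReal_le_one⟩
  have hq01 : 0 ≤ q ∧ q ≤ 1 := hq i₀ ▸ ⟨measureReal_nonneg, measureReal_le_one⟩
  have hr01 : 0 ≤ r ∧ r ≤ 1 := hr i₀ ▸ ⟨measureReal_nonneg, measureReal_le_one⟩
  have hη1 : η ≤ 1 := by nlinarith [mul_nonneg hp01.1 hq01.1, mul_le_one₀ hp01.2 hq01.1 hq01.2]
  set τ := K * |c| / 2
  have hτ : 0 < τ := by positivity
  let f : Ω → (ι → Bool) := fun ω i => decide (ω ∈ A i)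
  let g : Ω → (ι → Bool) := fun ω i => decide (ω ∈ B i)
  let Q : Finset ((ι → Bool) × (ι → Bool)) := Finset.univ.filter fun st =>
    |∑ i, (if st.1 i ∧ st.2 i then 1 else 0) - K * r| < τ
  have hjoint : 1 - (K / 4 + K ^ 2 * η) / τ ^ 2 ≤ P.real ((fun ω => (f ω, g ω)) ⁻¹' Q) := by
    convert one_sub_le_measureReal_abs_sum_indicator_sub_lt (μ := P)
      (fun i => (hAm i).inter (hBm i)) hr hη hAB hτ using 3
    ext ω; simp [f, g, Q, K, Set.indicator_apply]
  have hprod : (P.prod P).real (Prod.map f g ⁻¹' Q) ≤ (K / 4 + K ^ 2 * (3 * η)) / τ ^ 2 := by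
    have hpair : Pairwise fun i j =>
        (P.prod P).real (A i ×ˢ B i ∩ A j ×ˢ B j) ≤ (p * q) ^ 2 + 3 * η := fun i j hij => by
      dsimp only
      rw [Set.prod_inter_prod, measureReal_prod_prod]
      have := mul_le_mul (hAA hij) (hBB hij) measureReal_nonneg (by positivity)
      nlinarith [mul_le_one₀ hp01.2 hp01.1 hp01.2, mul_le_one₀ hq01.2 hq01.1 hq01.2]
    have hfar : 2 * τ ≤ |K * r - K * (p * q)| := by
      rw [← mul_sub, abs_mul, abs_of_pos hK0]
      exact le_of_eq (by ring)
    convert measureReal_abs_sum_indicator_sub_lt_le (fun i => (hAm i).prod (hBm i))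
      (fun i => by rw [measureReal_prod_prod, hp, hq]) (by positivity) hpair hτ hfar using 3
    ext z; simp [f, g, Q, K, Set.indicator_apply]
  -- the two Chebyshev errors are `1 / (K c²) + 4η / c²` and `1 / (K c²) + 12η / c²`
  have harith : (K / 4 + K ^ 2 * η) / τ ^ 2 + (K / 4 + K ^ 2 * (3 * η)) / τ ^ 2 ≤ 1 / 2 := by
    have hτ2 : τ ^ 2 = K ^ 2 * c ^ 2 / 4 := by
      simp only [τ]; rw [div_pow, mul_pow, sq_abs]; ring
    rw [← add_div, div_le_iff₀ (by positivity), hτ2]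
    nlinarith [mul_le_mul_of_nonneg_left hK hK0.le, mul_le_mul_of_nonneg_left hηc (sq_nonneg K)]
  refine (ENNReal.ofReal_le_ofReal ?_).trans (ofReal_abs_sub_le_betaDep h𝒜 h𝒝
    (measurable_signature hA <| measurableSet_singleton ·)
    (measurable_signature hB <| measurableSet_singleton ·) Q)
  linarith [le_abs_self (P.real ((fun ω => (f ω, g ω)) ⁻¹' Q)
    - (P.prod P).real (Prod.map f g ⁻¹' Q))]

end Copies

section BetaStar

variable {mΩ : MeasurableSpace Ω} {P : Measure Ω} [IsProbabilityMeasure P] {X : ℤ → Ω → ℝ}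

lemma disjoint_of_le_abs_sub {N : ℕ} (hN : 0 < N) {S T : Set ℤ}
    (hgap : ∀ s ∈ S, ∀ t ∈ T, (N : ℤ) ≤ |s - t|) : Disjoint S T :=
  Set.disjoint_left.2 fun z hS hT => by
    have := hgap z hS z hT
    rw [sub_self, abs_zero] at this
    omega

lemma betaDep_le_betaStarSeq {N : ℕ} {S T : Set ℤ} (hST : Disjoint S T)
    (hgap : ∀ s ∈ S, ∀ t ∈ T, (N : ℤ) ≤ |s - t|) :
    betaDep P (sigmaOn X S) (sigmaOn X T) ≤ betaStarSeq P X N := by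
  rcases S.eq_empty_or_nonempty with rfl | hS
  · simp [betaDep_eq_zero_of_indep (indep_bot_left _)]
  rcases T.eq_empty_or_nonempty with rfl | hT
  · simp [betaDep_eq_zero_of_indep (indep_bot_right _)]
  exact le_iSup_of_le S <| le_iSup_of_le T <| le_iSup_of_le hS <| le_iSup_of_le hT <|
    le_iSup_of_le hST <| le_iSup_of_le hgap le_rfl

lemma measureReal_inter_le_of_betaStarSeq_le (hX : ∀ k, Measurable (X k)) {N : ℕ} (hN : 0 < N)
    {S T : Set ℤ} (hgap : ∀ s ∈ S, ∀ t ∈ T, (N : ℤ) ≤ |s - t|) {U V : Set Ω}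
    (hU : MeasurableSet[sigmaOn X S] U) (hV : MeasurableSet[sigmaOn X T] V) {η : ℝ} (hη : 0 ≤ η)
    (hβ : betaStarSeq P X N ≤ ENNReal.ofReal η) :
    P.real (U ∩ V) ≤ P.real U * P.real V + η := by
  have h := (ofReal_abs_measureReal_inter_sub_le_betaDep (sigmaOn_le hX S) (sigmaOn_le hX T) hU
    hV).trans ((betaDep_le_betaStarSeq (disjoint_of_le_abs_sub hN hgap) hgap).trans hβ)
  linarith [le_abs_self (P.real (U ∩ V) - P.real U * P.real V),
    (ENNReal.ofReal_le_ofReal_iff hη).1 h]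

lemma MDependent.betaStarSeq_eq_zero {m n : ℕ} (hmd : MDependent P X m)
    (hX : ∀ k, Measurable (X k)) (hmn : m < n) : betaStarSeq P X n = 0 :=
  nonpos_iff_eq_zero.1 <| iSup_le fun _ => iSup_le fun _ => iSup_le fun _ => iSup_le fun _ =>
    iSup_le fun _ => iSup_le fun hgap => (betaDep_eq_zero_of_indep <| hmd.indep_sigmaOn hX
      fun s hs t ht => by have := hgap s hs t ht; omega).le

lemma MDependent.tendsto_betaStarSeq {m : ℕ} (hmd : MDependent P X m)
    (hX : ∀ k, Measurable (X k)) : Tendsto (betaStarSeq P X) atTop (nhds 0) :=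
  tendsto_const_nhds.congr' <| eventually_atTop.2
    ⟨m + 1, fun _ hn => (hmd.betaStarSeq_eq_zero hX hn).symm⟩

end BetaStar

section Stationary

lemma le_abs_sub_of_mem_image_add_mul {a b L : ℤ} {N : ℕ} (hL : b - a + N ≤ L) {S T : Set ℤ}
    (hS : S ⊆ Set.Icc a b) (hT : T ⊆ Set.Icc a b) {i j : ℤ} (hij : i ≠ j) :
    ∀ s ∈ (· + i * L) '' S, ∀ t ∈ (· + j * L) '' T, (N : ℤ) ≤ |s - t| := by
  rintro _ ⟨k, hk, rfl⟩ _ ⟨l, hl, rfl⟩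
  obtain ⟨⟨hak, hkb⟩, ⟨hal, hlb⟩⟩ := And.intro (hS hk) (hT hl)
  have hL0 : 0 ≤ L := by omega
  rcases lt_or_gt_of_ne hij with h | h
  · have : L ≤ (j - i) * L := le_mul_of_one_le_left hL0 (by omega)
    rw [abs_sub_comm]
    exact le_abs.2 (Or.inl (by simp only; nlinarith))
  · have : L ≤ (i - j) * L := le_mul_of_one_le_left hL0 (by omega)
    exact le_abs.2 (Or.inl (by simp only; nlinarith))

lemma le_abs_sub_of_mem_iUnion_image_add_mul {a b L : ℤ} {n N : ℕ} (hL : b - a + N ≤ L)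
    (hnN : n ≤ N) {S T : Set ℤ} (hS : S ⊆ Set.Icc a b) (hT : T ⊆ Set.Icc a b)
    (hgap : ∀ s ∈ S, ∀ t ∈ T, (n : ℤ) ≤ |s - t|) {ι : Type*} {k : ι → ℤ}
    (hk : Function.Injective k) :
    ∀ s ∈ ⋃ i, (· + k i * L) '' S, ∀ t ∈ ⋃ i, (· + k i * L) '' T, (n : ℤ) ≤ |s - t| := by
  intro s hs t ht
  obtain ⟨i, hs⟩ := Set.mem_iUnion.1 hs
  obtain ⟨j, ht⟩ := Set.mem_iUnion.1 ht
  by_cases hij : i = j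
  · subst hij
    obtain ⟨⟨s₀, hs₀, rfl⟩, ⟨t₀, ht₀, rfl⟩⟩ := And.intro hs ht
    simpa using hgap s₀ hs₀ t₀ ht₀
  · have := le_abs_sub_of_mem_image_add_mul hL hS hT (hk.ne hij) s hs t ht
    omega

variable {mΩ : MeasurableSpace Ω} {P : Measure Ω} {X : ℤ → Ω → ℝ}

lemma measurableSet_sigmaOn_image_add {S : Set ℤ} {W : Set (ℤ → ℝ)}
    (hW : MeasurableSet[sigmaOn (fun k (y : ℤ → ℝ) => y k) S] W) (t : ℤ) :
    MeasurableSet[sigmaOn X ((· + t) '' S)] ((fun ω k => X (k + t) ω) ⁻¹' W) := by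
  rw [← sigmaOn_comp_add, sigmaOn_eq_comap_coord]
  exact ⟨W, hW, rfl⟩

lemma StrictlyStationary.measureReal_preimage_shift (hstat : StrictlyStationary P X)
    (hX : ∀ k, Measurable (X k)) {W : Set (ℤ → ℝ)} (hW : MeasurableSet W) (t : ℤ) :
    P.real ((fun ω k => X (k + t) ω) ⁻¹' W) = P.real ((fun ω k => X k ω) ⁻¹' W) := by
  rw [measureReal_def, measureReal_def,
    ← Measure.map_apply (measurable_pi_lambda _ fun k => hX (k + t)) hW, hstat t,
    Measure.map_apply (measurable_pi_lambda _ hX) hW]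

lemma StrictlyStationary.exists_translate (hstat : StrictlyStationary P X)
    (hX : ∀ k, Measurable (X k)) {S T : Set ℤ} {U V : Set Ω} (hU : MeasurableSet[sigmaOn X S] U)
    (hV : MeasurableSet[sigmaOn X T] V) (t : ℤ) :
    ∃ U' V' : Set Ω, MeasurableSet[sigmaOn X ((· + t) '' S)] U' ∧
      MeasurableSet[sigmaOn X ((· + t) '' T)] V' ∧ P.real U' = P.real U ∧
      P.real V' = P.real V ∧ P.real (U' ∩ V') = P.real (U ∩ V) := by
  rw [sigmaOn_eq_comap_coord] at hU hV
  obtain ⟨WU, hWU, rfl⟩ := hU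
  obtain ⟨WV, hWV, rfl⟩ := hV
  have hmeas : ∀ {R : Set ℤ} {W : Set (ℤ → ℝ)},
      MeasurableSet[sigmaOn (fun k (y : ℤ → ℝ) => y k) R] W → MeasurableSet W :=
    fun hW => sigmaOn_le (fun k => measurable_pi_apply k) _ _ hW
  exact ⟨_, _, measurableSet_sigmaOn_image_add hWU t, measurableSet_sigmaOn_image_add hWV t,
    hstat.measureReal_preimage_shift hX (hmeas hWU) t,
    hstat.measureReal_preimage_shift hX (hmeas hWV) t,
    hstat.measureReal_preimage_shift hX ((hmeas hWU).inter (hmeas hWV)) t⟩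

end Stationary

section Converse

variable {mΩ : MeasurableSpace Ω} {P : Measure Ω} [IsProbabilityMeasure P] {X : ℤ → Ω → ℝ}

lemma StrictlyStationary.ofReal_half_le_betaStarSeq (hstat : StrictlyStationary P X)
    (hX : ∀ k, Measurable (X k)) {a b : ℤ} {S T : Set ℤ} (hS : S ⊆ Set.Icc a b)
    (hT : T ⊆ Set.Icc a b) {n N : ℕ} (hn : 0 < n) (hnN : n ≤ N)
    (hgap : ∀ s ∈ S, ∀ t ∈ T, (n : ℤ) ≤ |s - t|) {U V : Set Ω}
    (hU : MeasurableSet[sigmaOn X S] U) (hV : MeasurableSet[sigmaOn X T] V)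
    (hUV : P.real (U ∩ V) ≠ P.real U * P.real V)
    (hβ : betaStarSeq P X N ≤ ENNReal.ofReal ((P.real (U ∩ V) - P.real U * P.real V) ^ 2 / 64)) :
    ENNReal.ofReal (1 / 2) ≤ betaStarSeq P X n := by
  set c := P.real (U ∩ V) - P.real U * P.real V
  have hc : 0 < c ^ 2 := pow_pos (abs_pos.2 (sub_ne_zero.2 hUV)) 2 |>.trans_eq (sq_abs c)
  obtain ⟨K, hK⟩ := exists_nat_ge (16 / c ^ 2)
  set L : ℤ := b - a + N with hL
  let k : Fin K → ℤ := fun i => i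
  have hk : Function.Injective k := Nat.cast_injective.comp Fin.val_injective
  choose A B hA hB hp hq hr using fun i => hstat.exists_translate hX hU hV (k i * L)
  have hcopy : ∀ (i : Fin K) {R : Set ℤ}, R ⊆ S ∪ T →
      sigmaOn X ((· + k i * L) '' R) ≤ sigmaOn X ((· + k i * L) '' (S ∪ T)) :=
    fun i _ hR => sigmaOn_mono X (Set.image_mono hR)
  have hpair : ∀ {E : Fin K → Set Ω} {x : ℝ},
      (∀ i, MeasurableSet[sigmaOn X ((· + k i * L) '' (S ∪ T))] (E i)) → (∀ i, P.real (E i) = x) →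
      Pairwise fun i j => P.real (E i ∩ E j) ≤ x ^ 2 + c ^ 2 / 64 := fun hE hx i j hij =>
    (measureReal_inter_le_of_betaStarSeq_le hX (hn.trans_le hnN)
      (le_abs_sub_of_mem_image_add_mul hL.ge (Set.union_subset hS hT) (Set.union_subset hS hT)
        (hk.ne hij)) (hE i) (hE j) (by positivity) hβ).trans_eq (by rw [hx, hx, ← sq])
  have hA' := fun i => hcopy i Set.subset_union_left _ (hA i)
  have hB' := fun i => hcopy i Set.subset_union_right _ (hB i)
  have hgapST := le_abs_sub_of_mem_iUnion_image_add_mul hL.ge hnN hS hT hgap hk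
  refine (ofReal_half_le_betaDep_of_copies (sigmaOn_le hX _) (sigmaOn_le hX _)
    (fun i => sigmaOn_mono X (Set.subset_iUnion _ i) _ (hA i))
    (fun i => sigmaOn_mono X (Set.subset_iUnion _ i) _ (hB i)) hp hq hr (by positivity)
    (show 64 * (c ^ 2 / 64) ≤ c ^ 2 by linarith) ?_ (hpair hA' hp) (hpair hB' hq)
    (hpair (fun i => (hA' i).inter (hB' i)) hr)).trans
    (betaDep_le_betaStarSeq (disjoint_of_le_abs_sub hn hgapST) hgapST)
  rw [Fintype.card_fin]
  exact (div_le_iff₀ hc).1 hK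

lemma StrictlyStationary.exists_mDependent_of_tendsto_betaStarSeq
    (hstat : StrictlyStationary P X) (hX : ∀ k, Measurable (X k))
    (h : Tendsto (betaStarSeq P X) atTop (nhds 0)) : ∃ m, MDependent P X m := by
  by_contra hno
  obtain ⟨n, hn, hβn⟩ : ∃ n, 0 < n ∧ betaStarSeq P X n < ENNReal.ofReal (1 / 2) :=
    ((eventually_gt_atTop 0).and (h.eventually_lt_const (by norm_num))).exists
  obtain ⟨j, hj⟩ := not_forall.1 (not_exists.1 hno (n - 1))
  rw [show j + ((n - 1 : ℕ) : ℤ) + 1 = j + n by omega] at hj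
  obtain ⟨F, G, U, V, hF, hG, hU, hV, hUV⟩ := exists_measureReal_inter_ne_of_not_indep hX hj
  have hc : 0 < (P.real (U ∩ V) - P.real U * P.real V) ^ 2 / 64 := by
    have := sub_ne_zero.2 hUV
    positivity
  obtain ⟨N, hnN, hN⟩ := ((eventually_ge_atTop n).and
    (h.eventually_lt_const (ENNReal.ofReal_pos.2 hc))).exists
  obtain ⟨a, ha⟩ := (F ∪ G).bddBelow
  obtain ⟨b, hb⟩ := (F ∪ G).bddAbove
  have hwindow : ∀ {R : Finset ℤ}, R ⊆ F ∪ G → (R : Set ℤ) ⊆ Set.Icc a b :=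
    fun hR _ hk => ⟨ha (hR hk), hb (hR hk)⟩
  refine hβn.not_ge (hstat.ofReal_half_le_betaStarSeq hX (hwindow Finset.subset_union_left)
    (hwindow Finset.subset_union_right) hn hnN (fun s hs t ht => ?_) hU hV hUV hN.le)
  have := Set.mem_Iic.1 (hF hs)
  have := Set.mem_Ici.1 (hG ht)
  rw [abs_sub_comm, abs_of_nonneg (by omega)]
  omega

end Converse

/-- for a strictly stationary sequence, `β*(n) → 0` iff the sequence is
`m`-dependent for some `m ≥ 0`. -/
theorem betaStar_tendsto_zero_iff_mDependent
    {Ω : Type*} {mΩ : MeasurableSpace Ω} (P : Measure Ω) [IsProbabilityMeasure P]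
    (X : ℤ → Ω → ℝ) (hX : ∀ k, Measurable (X k)) (hstat : StrictlyStationary P X) :
    Tendsto (fun n : ℕ => betaStarSeq P X n) atTop (nhds 0) ↔
      ∃ m : ℕ, MDependent P X m :=
  ⟨hstat.exists_mDependent_of_tendsto_betaStarSeq hX, fun ⟨_, hmd⟩ => hmd.tendsto_betaStarSeq hX⟩

end StrongMixing
end
end

section
/- Let (Ω, F, P) be a probability space and let A_n and B_n, n = 1, 2, 3, …, be sub-σ-fields of F such that the σ-fields A_n ∨ B_n, n = 1, 2, 3, …, are independent. Then α(⋁_{n=1}^∞ A_n, ⋁_{n=1}^∞ B_n) ≤ Σ_{n=1}^∞ α(A_n, B_n). -/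
open MeasureTheory ProbabilityTheory ENNReal Filter

noncomputable section

namespace StrongMixing

variable {Ω : Type*}

/-!
Two blocks first: if `𝒜₁ ⊔ 𝒝₁` and `𝒜₂ ⊔ 𝒝₂` are independent, then on `(𝒜₁ ⊔ 𝒝₁) ⊗ (𝒜₂ ⊔ 𝒝₂)`
the law of `ω ↦ (ω, ω)` is `P ⊗ P`. Every `A ∈ 𝒜₁ ⊔ 𝒜₂` is the diagonal trace of some
`S ∈ 𝒜₁ ⊗ 𝒜₂`, and likewise `B` of `T ∈ 𝒝₁ ⊗ 𝒝₂`, so that `P (A ∩ B) = ∫ P (S_ω ∩ T_ω) dP(ω)`.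
Replacing `P (S_ω ∩ T_ω)` by `P (S_ω) P (T_ω)` costs at most `α(𝒜₂, 𝒝₂)`; the sections
`ω ↦ P (S_ω)` and `ω ↦ P (T_ω)` are `[0, 1]`-valued and measurable for `𝒜₁` and `𝒝₁`, and the
layer-cake formula `f = ∫₀¹ 1{t < f} dt` bounds their covariance by `α(𝒜₁, 𝒝₁)`.

Induction gives the bound for finitely many blocks. Sets of `⋁ 𝒜 n` are approximated in measure
by sets of the finite stages, and `P (A ∩ B) - P A P B` moves by at most twice the measures of
the symmetric differences, which passes the bound to the limit.
-/

open scoped unitInterval symmDiff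

lemma ofReal_abs_toReal_sub_le_iff {a b c : ℝ≥0∞} (ha : a ≠ ∞) (hb : b ≠ ∞) :
    ENNReal.ofReal |a.toReal - b.toReal| ≤ c ↔ a ≤ b + c ∧ b ≤ a + c := by
  rcases eq_or_ne c ∞ with rfl | hc
  · simp
  rw [ENNReal.ofReal_le_iff_le_toReal hc, abs_sub_le_iff, sub_le_iff_le_add', sub_le_iff_le_add',
    ← ENNReal.toReal_add hb hc, ← ENNReal.toReal_add ha hc,
    ENNReal.toReal_le_toReal ha (by finiteness), ENNReal.toReal_le_toReal hb (by finiteness)]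

section LayerCake

variable {X : Type*} {mX : MeasurableSpace X} {μ : Measure X}

lemma lintegral_le_lintegral_add_of_le_add [IsProbabilityMeasure μ] {u v : X → ℝ≥0∞}
    {c : ℝ≥0∞} (h : ∀ x, u x ≤ v x + c) :
    ∫⁻ x, u x ∂μ ≤ ∫⁻ x, v x ∂μ + c := by
  calc ∫⁻ x, u x ∂μ ≤ ∫⁻ x, v x + c ∂μ := lintegral_mono h
    _ = ∫⁻ x, v x ∂μ + c := by rw [lintegral_add_right' _ aemeasurable_const]; simp

lemma volume_setOf_ofReal_lt {x : ℝ≥0∞} (hx : x ≤ 1) :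
    volume {t : I | ENNReal.ofReal t < x} = x := by
  have hx' : x ≠ ∞ := ne_top_of_le_ne_top one_ne_top hx
  have himage : Subtype.val '' {t : I | ENNReal.ofReal t < x} = Set.Ico 0 x.toReal := by
    ext t
    simp only [Set.mem_image, Set.mem_ofPred_eq, Subtype.exists, Set.mem_Icc, Set.mem_Ico,
      exists_and_right, exists_eq_right]
    constructor
    · rintro ⟨⟨h0, -⟩, ht⟩
      exact ⟨h0, (ENNReal.ofReal_lt_iff_lt_toReal h0 hx').1 ht⟩
    · rintro ⟨h0, ht⟩
      refine ⟨⟨h0, ht.le.trans ?_⟩, (ENNReal.ofReal_lt_iff_lt_toReal h0 hx').2 ht⟩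
      simpa using ENNReal.toReal_mono one_ne_top hx
  rw [unitInterval.volume_apply, himage, Real.volume_Ico, sub_zero, ENNReal.ofReal_toReal hx']

lemma lintegral_eq_lintegral_measure_setOf_lt [SFinite μ] {f : X → ℝ≥0∞} (hf : Measurable f)
    (hf1 : ∀ x, f x ≤ 1) :
    ∫⁻ x, f x ∂μ = ∫⁻ t : I, μ {x | ENNReal.ofReal t < f x} := by
  have hS : MeasurableSet {p : X × I | ENNReal.ofReal p.2 < f p.1} :=
    measurableSet_lt (by fun_prop) (hf.comp measurable_fst)
  calc ∫⁻ x, f x ∂μ = ∫⁻ x, volume {t : I | ENNReal.ofReal t < f x} ∂μ := by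
        simp_rw [volume_setOf_ofReal_lt (hf1 _)]
    _ = μ.prod volume {p : X × I | ENNReal.ofReal p.2 < f p.1} := (Measure.prod_apply hS).symm
    _ = ∫⁻ t : I, μ {x | ENNReal.ofReal t < f x} := Measure.prod_apply_symm hS

lemma lintegral_mul_eq_lintegral_measure_inter [SFinite μ] {f g : X → ℝ≥0∞} (hf : Measurable f)
    (hg : Measurable g) (hf1 : ∀ x, f x ≤ 1) (hg1 : ∀ x, g x ≤ 1) :
    ∫⁻ x, f x * g x ∂μ = ∫⁻ p : I × I,
      μ ({x | ENNReal.ofReal p.1 < f x} ∩ {x | ENNReal.ofReal p.2 < g x}) := by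
  have hS : MeasurableSet
      {q : X × (I × I) | ENNReal.ofReal q.2.1 < f q.1 ∧ ENNReal.ofReal q.2.2 < g q.1} :=
    (measurableSet_lt (by fun_prop) (hf.comp measurable_fst)).inter
      (measurableSet_lt (by fun_prop) (hg.comp measurable_fst))
  calc ∫⁻ x, f x * g x ∂μ
      = ∫⁻ x, (volume : Measure (I × I))
          ({t : I | ENNReal.ofReal t < f x} ×ˢ {t : I | ENNReal.ofReal t < g x}) ∂μ := by
        simp_rw [Measure.volume_eq_prod, Measure.prod_prod, volume_setOf_ofReal_lt (hf1 _),
          volume_setOf_ofReal_lt (hg1 _)]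
    _ = μ.prod volume
          {q : X × (I × I) | ENNReal.ofReal q.2.1 < f q.1 ∧ ENNReal.ofReal q.2.2 < g q.1} :=
        (Measure.prod_apply hS).symm
    _ = _ := Measure.prod_apply_symm hS

end LayerCake

section SubSigmaAlgebras

variable {mΩ : MeasurableSpace Ω} {P : Measure Ω}

lemma measurableSpace_prod_mono {m₁ m₂ m₁' m₂' : MeasurableSpace Ω} (h₁ : m₁ ≤ m₁')
    (h₂ : m₂ ≤ m₂') : m₁.prod m₂ ≤ m₁'.prod m₂' :=
  sup_le_sup (MeasurableSpace.comap_mono h₁) (MeasurableSpace.comap_mono h₂)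

lemma exists_measurableSet_prod_preimage_diag {m₁ m₂ : MeasurableSpace Ω} {A : Set Ω}
    (hA : MeasurableSet[m₁ ⊔ m₂] A) :
    ∃ S, MeasurableSet[m₁.prod m₂] S ∧ (fun ω => (ω, ω)) ⁻¹' S = A := by
  have hcomap := MeasurableSpace.comap_prodMk (mβ := m₁) (mγ := m₂) (id : Ω → Ω) id
  rw [MeasurableSpace.comap_id, MeasurableSpace.comap_id] at hcomap
  rw [← hcomap] at hA
  exact hA

lemma measurable_measure_prodMk_left_of_le [IsFiniteMeasure P] {m₁ m₂ : MeasurableSpace Ω}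
    (h₂ : m₂ ≤ mΩ) {S : Set (Ω × Ω)} (hS : MeasurableSet[m₁.prod m₂] S) :
    Measurable[m₁] fun ω => P (Prod.mk ω ⁻¹' S) := by
  have hsection (ω : Ω) : MeasurableSet[m₂] (Prod.mk ω ⁻¹' S) :=
    @measurable_prodMk_left Ω Ω m₁ m₂ ω S hS
  simp_rw [← trim_measurableSet_eq h₂ (hsection _)]
  exact @measurable_measure_prodMk_left Ω Ω m₁ m₂ _ _ S hS

lemma measure_preimage_diag_eq_lintegral [IsFiniteMeasure P] {m₁ m₂ : MeasurableSpace Ω}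
    (h₁ : m₁ ≤ mΩ) (h₂ : m₂ ≤ mΩ) (hind : Indep m₁ m₂ P) {S : Set (Ω × Ω)}
    (hS : MeasurableSet[m₁.prod m₂] S) :
    P ((fun ω => (ω, ω)) ⁻¹' S) = ∫⁻ ω, P (Prod.mk ω ⁻¹' S) ∂P := by
  -- The identity maps `(Ω, mΩ) → (Ω, m₁)` and `(Ω, mΩ) → (Ω, m₂)` are independent.
  have hid₁ : Measurable[mΩ, m₁] id := measurable_id'' h₁
  have hid₂ : Measurable[mΩ, m₂] id := measurable_id'' h₂
  have hfun : @IndepFun Ω Ω Ω mΩ m₁ m₂ id id P :=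
    (indepFun_iff_measure_inter_preimage_eq_mul (mβ := m₁) (mβ' := m₂)).2
      fun s t hs ht => (Indep_iff _ _ _).1 hind s t hs ht
  have hmap := (indepFun_iff_map_prod_eq_prod_map_map (mβ := m₁) (mβ' := m₂)
    (@Measurable.aemeasurable Ω Ω mΩ m₁ id P hid₁)
    (@Measurable.aemeasurable Ω Ω mΩ m₂ id P hid₂)).1 hfun
  have hdiag : Measurable[mΩ, m₁.prod m₂] fun ω => (ω, ω) := hid₁.prodMk hid₂
  have hsection (ω : Ω) : MeasurableSet[m₂] (Prod.mk ω ⁻¹' S) :=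
    @measurable_prodMk_left Ω Ω m₁ m₂ ω S hS
  rw [← Measure.map_apply hdiag hS]
  change (@Measure.map Ω (Ω × Ω) mΩ (m₁.prod m₂) (fun ω => (id ω, id ω)) P) S = _
  rw [hmap, @Measure.prod_apply Ω Ω m₁ m₂ _ _ _ S hS,
    @lintegral_map Ω Ω mΩ m₁ P _ id (@measurable_measure_prodMk_left Ω Ω m₁ m₂ _ _ S hS) hid₁]
  simp_rw [@Measure.map_apply Ω Ω mΩ m₂ P id hid₂ _ (hsection _)]
  rfl

lemma isSetRing_iUnion_measurableSet {ι : Type*} [Preorder ι] [IsDirected ι (· ≤ ·)]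
    [Nonempty ι] {m : ι → MeasurableSpace Ω} (hm : Monotone m) :
    IsSetRing (⋃ i, {s | MeasurableSet[m i] s}) := by
  have hcommon {s t : Set Ω} (hs : s ∈ ⋃ i, {s | MeasurableSet[m i] s})
      (ht : t ∈ ⋃ i, {s | MeasurableSet[m i] s}) :
      ∃ k, MeasurableSet[m k] s ∧ MeasurableSet[m k] t := by
    obtain ⟨i, hs⟩ := Set.mem_iUnion.1 hs
    obtain ⟨j, ht⟩ := Set.mem_iUnion.1 ht
    obtain ⟨k, hik, hjk⟩ := directed_of (· ≤ ·) i j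
    exact ⟨k, hm hik s hs, hm hjk t ht⟩
  refine ⟨Set.mem_iUnion.2 ⟨Classical.arbitrary ι, @MeasurableSet.empty Ω (m _)⟩,
    fun s t hs ht => ?_, fun s t hs ht => ?_⟩
  · obtain ⟨k, hs, ht⟩ := hcommon hs ht
    exact Set.mem_iUnion.2 ⟨k, hs.union ht⟩
  · obtain ⟨k, hs, ht⟩ := hcommon hs ht
    exact Set.mem_iUnion.2 ⟨k, hs.diff ht⟩

lemma exists_measurableSet_measure_symmDiff_lt [IsFiniteMeasure P] {ι : Type*} [Preorder ι]
    [IsDirected ι (· ≤ ·)] [Nonempty ι] {m : ι → MeasurableSpace Ω} (hm : Monotone m)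
    (hle : ∀ i, m i ≤ mΩ) {A : Set Ω} (hA : MeasurableSet[⨆ i, m i] A) {ε : ℝ≥0∞}
    (hε : 0 < ε) :
    ∃ i A', MeasurableSet[m i] A' ∧ P (A ∆ A') < ε := by
  obtain ⟨A', hA', hlt⟩ := @exists_measure_symmDiff_lt_of_generateFrom_isSetRing Ω (⨆ i, m i)
    (P.trim (iSup_le hle)) _ _ (isSetRing_iUnion_measurableSet hm)
    ⟨{Set.univ}, Set.countable_singleton _, by simp, by simp⟩
    (MeasurableSpace.generateFrom_iUnion_measurableSet m).symm A hA ε hε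
  obtain ⟨i, hA'⟩ := Set.mem_iUnion.1 hA'
  refine ⟨i, A', hA', ?_⟩
  rwa [trim_measurableSet_eq _ ((le_iSup m i A' hA').symmDiff hA), symmDiff_comm] at hlt

lemma measure_inter_le_add_measure_symmDiff (A A' B B' : Set Ω) :
    P (A ∩ B) ≤ P (A' ∩ B') + (P (A ∆ A') + P (B ∆ B')) := by
  calc P (A ∩ B) ≤ P (A' ∩ B' ∪ (A ∆ A' ∪ B ∆ B')) := by
        refine measure_mono fun ω ⟨hA, hB⟩ => ?_
        simp only [Set.mem_union, Set.mem_inter_iff, Set.mem_symmDiff]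
        tauto
    _ ≤ P (A' ∩ B') + (P (A ∆ A') + P (B ∆ B')) :=
        (measure_union_le _ _).trans (by gcongr; exact measure_union_le _ _)

lemma measure_mul_le_add_measure_symmDiff [IsProbabilityMeasure P] (A A' B B' : Set Ω) :
    P A * P B ≤ P A' * P B' + (P (A ∆ A') + P (B ∆ B')) := by
  have hle (U V : Set Ω) : P U ≤ P V + P (U ∆ V) := tsub_le_iff_left.1 le_measure_symmDiff
  calc P A * P B ≤ (P A' + P (A ∆ A')) * P B := by gcongr; exact hle _ _
    _ = P A' * P B + P (A ∆ A') * P B := add_mul _ _ _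
    _ ≤ P A' * (P B' + P (B ∆ B')) + P (A ∆ A') := by
        gcongr
        · exact hle _ _
        · exact mul_le_of_le_one_right' prob_le_one
    _ = P A' * P B' + P A' * P (B ∆ B') + P (A ∆ A') := by rw [mul_add]
    _ ≤ P A' * P B' + P (B ∆ B') + P (A ∆ A') := by
        gcongr; exact mul_le_of_le_one_left' prob_le_one
    _ = P A' * P B' + (P (A ∆ A') + P (B ∆ B')) := by ring

lemma measure_inter_le_and_mul_le_of_symmDiff [IsProbabilityMeasure P] {A A' B B' : Set Ω}
    {c : ℝ≥0∞} (h : P (A' ∩ B') ≤ P A' * P B' + c ∧ P A' * P B' ≤ P (A' ∩ B') + c) :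
    P (A ∩ B) ≤ P A * P B + (c + 2 * (P (A ∆ A') + P (B ∆ B'))) ∧
      P A * P B ≤ P (A ∩ B) + (c + 2 * (P (A ∆ A') + P (B ∆ B'))) := by
  set d := P (A ∆ A') + P (B ∆ B')
  have hd' : P (A' ∆ A) + P (B' ∆ B) = d := by rw [symmDiff_comm A', symmDiff_comm B']
  constructor
  · calc P (A ∩ B) ≤ P (A' ∩ B') + d := measure_inter_le_add_measure_symmDiff ..
      _ ≤ P A' * P B' + c + d := by gcongr; exact h.1
      _ ≤ P A * P B + d + c + d := by
          gcongr; rw [← hd']; exact measure_mul_le_add_measure_symmDiff ..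
      _ = P A * P B + (c + 2 * d) := by ring
  · calc P A * P B ≤ P A' * P B' + d := measure_mul_le_add_measure_symmDiff ..
      _ ≤ P (A' ∩ B') + c + d := by gcongr; exact h.2
      _ ≤ P (A ∩ B) + d + c + d := by
          gcongr; rw [← hd']; exact measure_inter_le_add_measure_symmDiff ..
      _ = P (A ∩ B) + (c + 2 * d) := by ring

end SubSigmaAlgebras

section AlphaDep

variable {mΩ : MeasurableSpace Ω} {P : Measure Ω}

lemma alphaDep_le_iff [IsFiniteMeasure P] {𝒜 𝒝 : MeasurableSpace Ω} {c : ℝ≥0∞} :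
    alphaDep P 𝒜 𝒝 ≤ c ↔ ∀ A, MeasurableSet[𝒜] A → ∀ B, MeasurableSet[𝒝] B →
      P (A ∩ B) ≤ P A * P B + c ∧ P A * P B ≤ P (A ∩ B) + c := by
  simp only [alphaDep, iSup_le_iff, ← ENNReal.toReal_mul]
  exact forall₄_congr fun A _ B _ => ofReal_abs_toReal_sub_le_iff (by finiteness) (by finiteness)

lemma measure_inter_le_and_mul_le_add_alphaDep [IsFiniteMeasure P] {𝒜 𝒝 : MeasurableSpace Ω}
    {A B : Set Ω} (hA : MeasurableSet[𝒜] A) (hB : MeasurableSet[𝒝] B) :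
    P (A ∩ B) ≤ P A * P B + alphaDep P 𝒜 𝒝 ∧ P A * P B ≤ P (A ∩ B) + alphaDep P 𝒜 𝒝 :=
  alphaDep_le_iff.1 le_rfl A hA B hB

lemma alphaDep_bot [IsProbabilityMeasure P] (𝒝 : MeasurableSpace Ω) : alphaDep P ⊥ 𝒝 = 0 := by
  refine nonpos_iff_eq_zero.1 (alphaDep_le_iff.2 fun A hA B _ => ?_)
  rcases MeasurableSpace.measurableSet_bot_iff.1 hA with rfl | rfl <;> simp

lemma lintegral_mul_le_and_le_add_alphaDep [IsProbabilityMeasure P] {𝒜 𝒝 : MeasurableSpace Ω}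
    (h𝒜 : 𝒜 ≤ mΩ) (h𝒝 : 𝒝 ≤ mΩ) {f g : Ω → ℝ≥0∞} (hf : Measurable[𝒜] f)
    (hg : Measurable[𝒝] g) (hf1 : ∀ ω, f ω ≤ 1) (hg1 : ∀ ω, g ω ≤ 1) :
    ∫⁻ ω, f ω * g ω ∂P ≤ (∫⁻ ω, f ω ∂P) * (∫⁻ ω, g ω ∂P) + alphaDep P 𝒜 𝒝 ∧
      (∫⁻ ω, f ω ∂P) * (∫⁻ ω, g ω ∂P) ≤ ∫⁻ ω, f ω * g ω ∂P + alphaDep P 𝒜 𝒝 := by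
  have hfA (t : ℝ) : MeasurableSet[𝒜] {ω | ENNReal.ofReal t < f ω} :=
    measurableSet_lt measurable_const hf
  have hgB (t : ℝ) : MeasurableSet[𝒝] {ω | ENNReal.ofReal t < g ω} :=
    measurableSet_lt measurable_const hg
  have hantitone {h : Ω → ℝ≥0∞} : Antitone fun t : I => P {ω | ENNReal.ofReal t < h ω} :=
    fun _ _ hst => measure_mono fun _ hω =>
      lt_of_le_of_lt (ENNReal.ofReal_le_ofReal (Subtype.coe_le_coe.2 hst)) hω
  have hprod : (∫⁻ ω, f ω ∂P) * (∫⁻ ω, g ω ∂P) = ∫⁻ p : I × I,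
      P {ω | ENNReal.ofReal p.1 < f ω} * P {ω | ENNReal.ofReal p.2 < g ω} := by
    rw [lintegral_eq_lintegral_measure_setOf_lt (hf.mono h𝒜 le_rfl) hf1,
      lintegral_eq_lintegral_measure_setOf_lt (hg.mono h𝒝 le_rfl) hg1, Measure.volume_eq_prod,
      lintegral_prod_mul hantitone.measurable.aemeasurable hantitone.measurable.aemeasurable]
  rw [hprod, lintegral_mul_eq_lintegral_measure_inter (hf.mono h𝒜 le_rfl) (hg.mono h𝒝 le_rfl)
    hf1 hg1]
  exact ⟨lintegral_le_lintegral_add_of_le_add fun p =>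
      (measure_inter_le_and_mul_le_add_alphaDep (hfA p.1) (hgB p.2)).1,
    lintegral_le_lintegral_add_of_le_add fun p =>
      (measure_inter_le_and_mul_le_add_alphaDep (hfA p.1) (hgB p.2)).2⟩

lemma alphaDep_sup_le_add [IsProbabilityMeasure P] {𝒜₁ 𝒜₂ 𝒝₁ 𝒝₂ : MeasurableSpace Ω}
    (h𝒜₁ : 𝒜₁ ≤ mΩ) (h𝒜₂ : 𝒜₂ ≤ mΩ) (h𝒝₁ : 𝒝₁ ≤ mΩ) (h𝒝₂ : 𝒝₂ ≤ mΩ)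
    (hind : Indep (𝒜₁ ⊔ 𝒝₁) (𝒜₂ ⊔ 𝒝₂) P) :
    alphaDep P (𝒜₁ ⊔ 𝒜₂) (𝒝₁ ⊔ 𝒝₂) ≤ alphaDep P 𝒜₁ 𝒝₁ + alphaDep P 𝒜₂ 𝒝₂ := by
  refine alphaDep_le_iff.2 fun A hA B hB => ?_
  obtain ⟨S, hS, rfl⟩ := exists_measurableSet_prod_preimage_diag hA
  obtain ⟨T, hT, rfl⟩ := exists_measurableSet_prod_preimage_diag hB
  have hS' := measurableSpace_prod_mono (le_sup_left : 𝒜₁ ≤ 𝒜₁ ⊔ 𝒝₁)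
    (le_sup_left : 𝒜₂ ≤ 𝒜₂ ⊔ 𝒝₂) S hS
  have hT' := measurableSpace_prod_mono (le_sup_right : 𝒝₁ ≤ 𝒜₁ ⊔ 𝒝₁)
    (le_sup_right : 𝒝₂ ≤ 𝒜₂ ⊔ 𝒝₂) T hT
  have hrepr {U : Set (Ω × Ω)} (hU : MeasurableSet[(𝒜₁ ⊔ 𝒝₁).prod (𝒜₂ ⊔ 𝒝₂)] U) :=
    measure_preimage_diag_eq_lintegral (P := P) (sup_le h𝒜₁ h𝒝₁) (sup_le h𝒜₂ h𝒝₂) hind hU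
  rw [← Set.preimage_inter, hrepr (hS'.inter hT'), hrepr hS', hrepr hT']
  simp only [Set.preimage_inter]
  have hsection (ω : Ω) := measure_inter_le_and_mul_le_add_alphaDep (P := P)
    (@measurable_prodMk_left Ω Ω 𝒜₁ 𝒜₂ ω S hS) (@measurable_prodMk_left Ω Ω 𝒝₁ 𝒝₂ ω T hT)
  obtain ⟨hcov₁, hcov₂⟩ := lintegral_mul_le_and_le_add_alphaDep (P := P) h𝒜₁ h𝒝₁
    (measurable_measure_prodMk_left_of_le h𝒜₂ hS) (measurable_measure_prodMk_left_of_le h𝒝₂ hT)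
    (fun _ => prob_le_one (μ := P)) (fun _ => prob_le_one (μ := P))
  set F := fun ω => P (Prod.mk ω ⁻¹' S)
  set G := fun ω => P (Prod.mk ω ⁻¹' T)
  constructor
  · calc ∫⁻ ω, P (Prod.mk ω ⁻¹' S ∩ Prod.mk ω ⁻¹' T) ∂P
        ≤ ∫⁻ ω, F ω * G ω ∂P + alphaDep P 𝒜₂ 𝒝₂ :=
          lintegral_le_lintegral_add_of_le_add fun ω => (hsection ω).1
      _ ≤ (∫⁻ ω, F ω ∂P) * (∫⁻ ω, G ω ∂P) + alphaDep P 𝒜₁ 𝒝₁ + alphaDep P 𝒜₂ 𝒝₂ := by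
          gcongr
      _ = _ := add_assoc _ _ _
  · calc (∫⁻ ω, F ω ∂P) * (∫⁻ ω, G ω ∂P)
        ≤ ∫⁻ ω, F ω * G ω ∂P + alphaDep P 𝒜₁ 𝒝₁ := hcov₂
      _ ≤ ∫⁻ ω, P (Prod.mk ω ⁻¹' S ∩ Prod.mk ω ⁻¹' T) ∂P + alphaDep P 𝒜₂ 𝒝₂
            + alphaDep P 𝒜₁ 𝒝₁ := by
          gcongr
          exact lintegral_le_lintegral_add_of_le_add fun ω => (hsection ω).2
      _ = _ := by ring

lemma alphaDep_biSup_le_sum [IsProbabilityMeasure P] {ι : Type*} {𝒜 𝒝 : ι → MeasurableSpace Ω}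
    (h𝒜 : ∀ i, 𝒜 i ≤ mΩ) (h𝒝 : ∀ i, 𝒝 i ≤ mΩ) (hind : iIndep (fun i => 𝒜 i ⊔ 𝒝 i) P)
    (s : Finset ι) :
    alphaDep P (⨆ i ∈ s, 𝒜 i) (⨆ i ∈ s, 𝒝 i) ≤ ∑ i ∈ s, alphaDep P (𝒜 i) (𝒝 i) := by
  classical
  induction s using Finset.induction_on with
  | empty => simp [alphaDep_bot]
  | insert a s ha ih =>
    have hind' : Indep (𝒜 a ⊔ 𝒝 a) ((⨆ i ∈ s, 𝒜 i) ⊔ ⨆ i ∈ s, 𝒝 i) P := by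
      have h := indep_iSup_of_disjoint (fun i => sup_le (h𝒜 i) (h𝒝 i)) hind
        (Set.disjoint_singleton_left.2 ha)
      simpa only [Set.mem_singleton_iff, iSup_iSup_eq_left, Finset.mem_coe, iSup_sup_eq] using h
    rw [Finset.iSup_insert, Finset.iSup_insert, Finset.sum_insert ha]
    calc alphaDep P (𝒜 a ⊔ ⨆ i ∈ s, 𝒜 i) (𝒝 a ⊔ ⨆ i ∈ s, 𝒝 i)
        ≤ alphaDep P (𝒜 a) (𝒝 a) + alphaDep P (⨆ i ∈ s, 𝒜 i) (⨆ i ∈ s, 𝒝 i) :=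
          alphaDep_sup_le_add (h𝒜 a) (iSup₂_le fun i _ => h𝒜 i) (h𝒝 a)
            (iSup₂_le fun i _ => h𝒝 i) hind'
      _ ≤ _ := by gcongr

lemma alphaDep_iSup_le_iSup [IsProbabilityMeasure P] {ι : Type*} [Preorder ι]
    [IsDirected ι (· ≤ ·)] [Nonempty ι] {𝒜 𝒝 : ι → MeasurableSpace Ω} (h𝒜 : Monotone 𝒜)
    (h𝒝 : Monotone 𝒝) (h𝒜le : ∀ i, 𝒜 i ≤ mΩ) (h𝒝le : ∀ i, 𝒝 i ≤ mΩ) :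
    alphaDep P (⨆ i, 𝒜 i) (⨆ i, 𝒝 i) ≤ ⨆ i, alphaDep P (𝒜 i) (𝒝 i) := by
  refine alphaDep_le_iff.2 fun A hA B hB => ?_
  set c := ⨆ i, alphaDep P (𝒜 i) (𝒝 i)
  have happrox (δ : ℝ≥0∞) (hδ : 0 < δ) :
      P (A ∩ B) ≤ P A * P B + (c + 4 * δ) ∧ P A * P B ≤ P (A ∩ B) + (c + 4 * δ) := by
    obtain ⟨i, A', hA', hdA⟩ := exists_measurableSet_measure_symmDiff_lt (P := P) h𝒜 h𝒜le hA hδ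
    obtain ⟨j, B', hB', hdB⟩ := exists_measurableSet_measure_symmDiff_lt (P := P) h𝒝 h𝒝le hB hδ
    obtain ⟨k, hik, hjk⟩ := directed_of (· ≤ ·) i j
    have hk := alphaDep_le_iff.1 (le_iSup (fun i => alphaDep P (𝒜 i) (𝒝 i)) k)
      A' (h𝒜 hik _ hA') B' (h𝒝 hjk _ hB')
    have hd : c + 2 * (P (A ∆ A') + P (B ∆ B')) ≤ c + 4 * δ := by
      calc c + 2 * (P (A ∆ A') + P (B ∆ B')) ≤ c + 2 * (δ + δ) := by gcongr
        _ = c + 4 * δ := by ring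
    obtain ⟨h₁, h₂⟩ := measure_inter_le_and_mul_le_of_symmDiff hk
    exact ⟨h₁.trans (by gcongr), h₂.trans (by gcongr)⟩
  have hquarter (ε : NNReal) (hε : 0 < ε) : 0 < (ε : ℝ≥0∞) / 4 ∧ 4 * ((ε : ℝ≥0∞) / 4) = ε :=
    ⟨by simpa using hε.ne', ENNReal.mul_div_cancel (by norm_num) (by norm_num)⟩
  constructor <;> refine ENNReal.le_of_forall_pos_le_add fun ε hε _ => ?_
  · simpa only [(hquarter ε hε).2, ← add_assoc] using (happrox _ (hquarter ε hε).1).1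
  · simpa only [(hquarter ε hε).2, ← add_assoc] using (happrox _ (hquarter ε hε).1).2

end AlphaDep

/-- if the σ-fields `𝒜 n ⊔ 𝒝 n` are independent, then
`α(⋁ 𝒜 n, ⋁ 𝒝 n) ≤ Σ α(𝒜 n, 𝒝 n)`. -/
theorem alpha_iSup_le_tsum
    {Ω : Type*} {mΩ : MeasurableSpace Ω} (P : Measure Ω) [IsProbabilityMeasure P]
    (𝒜 𝒝 : ℕ → MeasurableSpace Ω) (h𝒜 : ∀ n, 𝒜 n ≤ mΩ) (h𝒝 : ∀ n, 𝒝 n ≤ mΩ)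
    (hindep : ProbabilityTheory.iIndep (fun n => 𝒜 n ⊔ 𝒝 n) P) :
    alphaDep P (⨆ n, 𝒜 n) (⨆ n, 𝒝 n) ≤ ∑' n, alphaDep P (𝒜 n) (𝒝 n) := by
  have hmono (𝒞 : ℕ → MeasurableSpace Ω) : Monotone fun s : Finset ℕ => ⨆ n ∈ s, 𝒞 n :=
    fun _ _ hst => biSup_mono fun _ hn => hst hn
  rw [iSup_eq_iSup_finset 𝒜, iSup_eq_iSup_finset 𝒝, ENNReal.tsum_eq_iSup_sum]
  calc _ ≤ ⨆ s : Finset ℕ, alphaDep P (⨆ n ∈ s, 𝒜 n) (⨆ n ∈ s, 𝒝 n) :=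
        alphaDep_iSup_le_iSup (hmono 𝒜) (hmono 𝒝) (fun _ => iSup₂_le fun n _ => h𝒜 n)
          (fun _ => iSup₂_le fun n _ => h𝒝 n)
    _ ≤ ⨆ s : Finset ℕ, ∑ n ∈ s, alphaDep P (𝒜 n) (𝒝 n) :=
        iSup_mono (alphaDep_biSup_le_sum h𝒜 h𝒝 hindep)

end StrongMixing
end
end
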